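/- arXiv:1903.12231 — 10 statements merged into one kernel-verified Lean document; each statement's English description precedes it below -/
import Mathlib

section
/- Let r_1 ≥ r_2 ≥ ... ≥ r_n > 0, 1 ≤ k ≤ n-1, and for t with k ≤ t ≤ n define V(t) = (t-k) / (∑_{i=1}^t 1/r_i). Then for any t with k+1 ≤ t ≤ n, the inequality V(t) ≥ V(t-1) holds if and only if r_t ≥ V(t). -/
/-- For `k+1 ≤ t ≤ n`, `V(t) ≥ V(t-1)` iff `r_t ≥ V(t)`,
where `V(t) = (t-k)/(∑_{i=1}^t 1/r_i)`.  Boxes are indexed `0,…,n-1`,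
so the `t`-th box is `r (t-1)`. -/
theorem stmt_1 (n k : ℕ) (r : ℕ → ℝ)
    (hr : ∀ i < n, 0 < r i)
    (hmono : ∀ i j, i ≤ j → j < n → r j ≤ r i)
    (hk1 : 1 ≤ k) (hkn : k ≤ n - 1)
    (t : ℕ) (ht1 : k + 1 ≤ t) (ht2 : t ≤ n)
    (V : ℕ → ℝ) (hV : ∀ s, V s = ((s : ℝ) - k) / ∑ i ∈ Finset.range s, 1 / r i) :
    V (t - 1) ≤ V t ↔ V t ≤ r (t - 1) := by
  have ht : 1 ≤ t := by omega
  have hrpos : ∀ i < t, 0 < r i := fun i hi => hr i (lt_of_lt_of_le hi ht2)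
  have hrt : 0 < r (t - 1) := hrpos _ (by omega)
  set s1 : ℝ := ∑ i ∈ Finset.range (t - 1), 1 / r i with hs1def
  have hs1 : 0 < s1 := by
    apply Finset.sum_pos
    · intro i hi
      exact one_div_pos.mpr (hrpos i (by simp at hi; omega))
    · exact ⟨0, Finset.mem_range.mpr (by omega)⟩
  have hS : ∑ i ∈ Finset.range t, 1 / r i = s1 + 1 / r (t - 1) := by
    rw [show t = (t - 1) + 1 by omega, Finset.sum_range_succ]
    simp [hs1def]
  have hS2 : 0 < s1 + 1 / r (t - 1) := by positivity
  have hcast : ((t - 1 : ℕ) : ℝ) = (t : ℝ) - 1 := by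
    push_cast [Nat.cast_sub ht]; ring
  have hk : (k : ℝ) + 1 ≤ (t : ℝ) := by exact_mod_cast ht1
  have hrne : r (t - 1) ≠ 0 := ne_of_gt hrt
  have hinv : r (t - 1) * (1 / r (t - 1)) = 1 := by field_simp
  rw [hV, hV, hS, hcast, div_le_div_iff₀ hs1 hS2, div_le_iff₀ hS2]
  constructor
  · intro h
    nlinarith [mul_pos hrt hs1, mul_pos hrt hS2]
  · intro h
    nlinarith [mul_pos hrt hs1, mul_pos hrt hS2, mul_le_mul_of_nonneg_left h (le_of_lt hrt)]
end

section
/- Let r_1 ≥ ... ≥ r_n > 0, 1 ≤ k ≤ n-1, V(t) = (t-k)/(∑_{i=1}^t 1/r_i) for k ≤ t ≤ n, and t* a maximizer of V over {k,...,n}. Then the mixed strategy that opens box j ∈ [t*] with probability (1/r_j)/(∑_{i=1}^{t*} 1/r_i) guarantees expected payoff at least V(t*) against every set H of k booby-trapped boxes, and there is a Hider mixed strategy (over k-subsets of [n]) against which every box j yields expected payoff at most V(t*). Hence the value of the 1-box-opening game equals max_{k ≤ t ≤ n} V(t). -/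
open Finset

/-- Any point of the hypercube slice `∑ y = k` is a mixture of `k`-subset indicators. -/
lemma exists_hider_dist (m k : ℕ) :
    ∀ d (y : ℕ → ℝ),
      ((range m).filter (fun j => 0 < y j ∧ y j < 1)).card = d →
      (∀ j < m, 0 ≤ y j ∧ y j ≤ 1) → (∑ j ∈ range m, y j = k) →
    ∃ q : Finset ℕ → ℝ,
      (∀ H, 0 ≤ q H) ∧ (∀ H, q H ≠ 0 → H ⊆ range m ∧ H.card = k) ∧
      (∑ H ∈ (range m).powerset, q H = 1) ∧
      (∀ j < m, ∑ H ∈ (range m).powerset, (if j ∈ H then (0:ℝ) else q H) = 1 - y j) := by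
  intro d
  induction d using Nat.strong_induction_on with
  | _ d ih =>
  intro y hd hb hsum
  by_cases hF : ((range m).filter (fun j => 0 < y j ∧ y j < 1)) = ∅
  · -- all coordinates are 0 or 1
    have h01 : ∀ j < m, y j = 0 ∨ y j = 1 := by
      intro j hj
      by_contra h
      push_neg at h
      have hj' : j ∈ (range m).filter (fun j => 0 < y j ∧ y j < 1) := by
        simp only [mem_filter, mem_range]
        exact ⟨hj, lt_of_le_of_ne (hb j hj).1 (Ne.symm h.1), lt_of_le_of_ne (hb j hj).2 h.2⟩
      simp [hF] at hj'
    set A : Finset ℕ := (range m).filter (fun j => y j = 1) with hA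
    have hAsub : A ⊆ range m := filter_subset _ _
    have hsumA : ∑ j ∈ range m, y j = (A.card : ℝ) := by
      rw [← sum_filter_add_sum_filter_not (range m) (fun j => y j = 1) y]
      have h1 : ∑ j ∈ (range m).filter (fun j => y j = 1), y j = (A.card : ℝ) := by
        rw [hA, sum_congr rfl (fun j hj => (mem_filter.mp hj).2)]
        simp
      have h2 : ∑ j ∈ (range m).filter (fun j => ¬ y j = 1), y j = 0 := by
        apply sum_eq_zero
        intro j hj
        rcases mem_filter.mp hj with ⟨hj1, hj2⟩
        rcases h01 j (mem_range.mp hj1) with h | h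
        · exact h
        · exact absurd h hj2
      rw [h1, h2]; ring
    have hcard : A.card = k := by
      have : (A.card : ℝ) = (k : ℝ) := by rw [← hsumA, hsum]
      exact_mod_cast this
    refine ⟨fun H => if H = A then 1 else 0, ?_, ?_, ?_, ?_⟩
    · intro H; dsimp only; split <;> norm_num
    · intro H hH
      have : H = A := by by_contra h; simp [h] at hH
      subst this; exact ⟨hAsub, hcard⟩
    · rw [sum_ite_eq' ((range m).powerset) A (fun _ => (1:ℝ))]
      simp [hAsub]
    · intro j hj
      have key : ∀ H, (if j ∈ H then (0:ℝ) else if H = A then 1 else 0)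
          = if H = A then (if j ∈ A then (0:ℝ) else 1) else 0 := by
        intro H
        by_cases h1 : H = A <;> by_cases h2 : j ∈ H <;> subst_eqs <;> simp_all
      rw [sum_congr rfl (fun H _ => key H),
        sum_ite_eq' ((range m).powerset) A (fun _ => if j ∈ A then (0:ℝ) else 1)]
      simp only [mem_powerset, hAsub, if_true]
      by_cases hja : j ∈ A
      · have : y j = 1 := (mem_filter.mp hja).2
        simp [hja, this]
      · have : y j = 0 := by
          rcases h01 j hj with h | h
          · exact h
          · exact absurd (mem_filter.mpr ⟨mem_range.mpr hj, h⟩) hja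
        simp [hja, this]
  · -- inductive step
    set F := (range m).filter (fun j => 0 < y j ∧ y j < 1) with hFdef
    have hd0 : d ≠ 0 := by
      intro h; subst h; exact hF (card_eq_zero.mp hd)
    have hd1 : d ≠ 1 := by
      intro h
      subst h
      obtain ⟨a, hFa⟩ := card_eq_one.mp hd
      have haF : a ∈ F := by rw [hFa]; exact mem_singleton_self a
      have ham : a ∈ range m := (mem_filter.mp haF).1
      have haP : 0 < y a ∧ y a < 1 := (mem_filter.mp haF).2
      have h01 : ∀ j ∈ (range m).erase a, y j = 0 ∨ y j = 1 := by
        intro j hj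
        obtain ⟨hja, hjm⟩ := mem_erase.mp hj
        by_contra h
        push_neg at h
        have : j ∈ F := mem_filter.mpr ⟨hjm,
          lt_of_le_of_ne (hb j (mem_range.mp hjm)).1 (Ne.symm h.1),
          lt_of_le_of_ne (hb j (mem_range.mp hjm)).2 h.2⟩
        rw [hFa, mem_singleton] at this
        exact hja this
      set Bc : ℕ := (((range m).erase a).filter (fun j => y j = 1)).card with hBc
      have hsb : ∑ j ∈ (range m).erase a, y j = (Bc : ℝ) := by
        rw [← sum_filter_add_sum_filter_not ((range m).erase a) (fun j => y j = 1) y]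
        have h1 : ∑ j ∈ ((range m).erase a).filter (fun j => y j = 1), y j = (Bc : ℝ) := by
          rw [sum_congr rfl (fun j hj => (mem_filter.mp hj).2)]; simp [hBc]
        have h2 : ∑ j ∈ ((range m).erase a).filter (fun j => ¬ y j = 1), y j = 0 := by
          apply sum_eq_zero
          intro j hj
          rcases mem_filter.mp hj with ⟨hj1, hj2⟩
          rcases h01 j hj1 with h | h
          · exact h
          · exact absurd h hj2
        rw [h1, h2]; ring
      have hya : y a = (k : ℝ) - (Bc : ℝ) := by
        have := Finset.add_sum_erase (range m) y ham
        rw [hsb] at this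
        rw [hsum] at this
        linarith
      have hlt : (Bc : ℝ) < (k : ℝ) := by linarith [haP.1]
      have hgt : (k : ℝ) < (Bc : ℝ) + 1 := by linarith [haP.2]
      have h1 : Bc < k := by exact_mod_cast hlt
      have h2 : k < Bc + 1 := by exact_mod_cast hgt
      omega
    have hd2 : 1 < F.card := by omega
    obtain ⟨a, ha, b, hbF, hab⟩ := Finset.one_lt_card.mp hd2
    have ham : a ∈ range m := (mem_filter.mp ha).1
    have hbm : b ∈ range m := (mem_filter.mp hbF).1
    have haP : 0 < y a ∧ y a < 1 := (mem_filter.mp ha).2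
    have hbP : 0 < y b ∧ y b < 1 := (mem_filter.mp hbF).2
    set t : ℝ := min (1 - y a) (y b) with htdef
    set s : ℝ := min (y a) (1 - y b) with hsdef
    have ht : 0 < t := lt_min (by linarith [haP.2]) hbP.1
    have hs : 0 < s := lt_min haP.1 (by linarith [hbP.2])
    have hta : t ≤ 1 - y a := min_le_left _ _
    have htb : t ≤ y b := min_le_right _ _
    have hsa : s ≤ y a := min_le_left _ _
    have hsb : s ≤ 1 - y b := min_le_right _ _
    set y1 : ℕ → ℝ := fun j => y j + (if j = a then t else 0) - (if j = b then t else 0) with hy1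
    set y2 : ℕ → ℝ := fun j => y j - (if j = a then s else 0) + (if j = b then s else 0) with hy2
    have hy1a : y1 a = y a + t := by simp [hy1, hab]
    have hy1b : y1 b = y b - t := by simp [hy1, Ne.symm hab]
    have hy2a : y2 a = y a - s := by simp [hy2, hab]
    have hy2b : y2 b = y b + s := by simp [hy2, Ne.symm hab]
    have hy1o : ∀ j, j ≠ a → j ≠ b → y1 j = y j := by intro j h1 h2; simp [hy1, h1, h2]
    have hy2o : ∀ j, j ≠ a → j ≠ b → y2 j = y j := by intro j h1 h2; simp [hy2, h1, h2]
    -- bounds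
    have hb1 : ∀ j < m, 0 ≤ y1 j ∧ y1 j ≤ 1 := by
      intro j hj
      by_cases hja : j = a
      · subst hja; rw [hy1a]; constructor <;> [linarith [haP.1]; linarith]
      · by_cases hjb : j = b
        · subst hjb; rw [hy1b]
          constructor <;> [linarith; linarith [hbP.2]]
        · rw [hy1o j hja hjb]; exact hb j hj
    have hb2 : ∀ j < m, 0 ≤ y2 j ∧ y2 j ≤ 1 := by
      intro j hj
      by_cases hja : j = a
      · subst hja; rw [hy2a]; constructor <;> [linarith; linarith [haP.2]]
      · by_cases hjb : j = b
        · subst hjb; rw [hy2b]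
          constructor <;> [linarith [hbP.1]; linarith]
        · rw [hy2o j hja hjb]; exact hb j hj
    -- sums
    have hsum1 : ∑ j ∈ range m, y1 j = (k : ℝ) := by
      simp only [hy1]
      rw [sum_sub_distrib, sum_add_distrib,
        sum_ite_eq' (range m) a (fun _ => t), sum_ite_eq' (range m) b (fun _ => t)]
      simp [ham, hbm, hsum]
    have hsum2 : ∑ j ∈ range m, y2 j = (k : ℝ) := by
      simp only [hy2]
      rw [sum_add_distrib, sum_sub_distrib,
        sum_ite_eq' (range m) a (fun _ => s), sum_ite_eq' (range m) b (fun _ => s)]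
      simp [ham, hbm, hsum]
    -- filter shrinks
    have hsub1 : (range m).filter (fun j => 0 < y1 j ∧ y1 j < 1) ⊆ F := by
      intro j hj
      obtain ⟨hjm, hP⟩ := mem_filter.mp hj
      by_cases hja : j = a
      · subst hja; exact ha
      · by_cases hjb : j = b
        · subst hjb; exact hbF
        · rw [hy1o j hja hjb] at hP; exact mem_filter.mpr ⟨hjm, hP⟩
    have hsub2 : (range m).filter (fun j => 0 < y2 j ∧ y2 j < 1) ⊆ F := by
      intro j hj
      obtain ⟨hjm, hP⟩ := mem_filter.mp hj
      by_cases hja : j = a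
      · subst hja; exact ha
      · by_cases hjb : j = b
        · subst hjb; exact hbF
        · rw [hy2o j hja hjb] at hP; exact mem_filter.mpr ⟨hjm, hP⟩
    have hlt1 : ((range m).filter (fun j => 0 < y1 j ∧ y1 j < 1)).card < d := by
      rw [← hd]
      apply Finset.card_lt_card
      rcases min_cases (1 - y a) (y b) with ⟨heq, _⟩ | ⟨heq, _⟩
      · refine (Finset.ssubset_iff_of_subset hsub1).mpr ⟨a, ha, ?_⟩
        intro hmem
        have := (mem_filter.mp hmem).2.2
        rw [hy1a] at this
        have ht' : t = 1 - y a := htdef.trans heq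
        linarith
      · refine (Finset.ssubset_iff_of_subset hsub1).mpr ⟨b, hbF, ?_⟩
        intro hmem
        have := (mem_filter.mp hmem).2.1
        rw [hy1b] at this
        have ht' : t = y b := htdef.trans heq
        linarith
    have hlt2 : ((range m).filter (fun j => 0 < y2 j ∧ y2 j < 1)).card < d := by
      rw [← hd]
      apply Finset.card_lt_card
      rcases min_cases (y a) (1 - y b) with ⟨heq, _⟩ | ⟨heq, _⟩
      · refine (Finset.ssubset_iff_of_subset hsub2).mpr ⟨a, ha, ?_⟩
        intro hmem
        have := (mem_filter.mp hmem).2.1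
        rw [hy2a] at this
        have hs' : s = y a := hsdef.trans heq
        linarith
      · refine (Finset.ssubset_iff_of_subset hsub2).mpr ⟨b, hbF, ?_⟩
        intro hmem
        have := (mem_filter.mp hmem).2.2
        rw [hy2b] at this
        have hs' : s = 1 - y b := hsdef.trans heq
        linarith
    obtain ⟨q1, hq1pos, hq1supp, hq1sum, hq1marg⟩ := ih _ hlt1 y1 rfl hb1 hsum1
    obtain ⟨q2, hq2pos, hq2supp, hq2sum, hq2marg⟩ := ih _ hlt2 y2 rfl hb2 hsum2
    set c : ℝ := s / (s + t) with hc
    have hst : 0 < s + t := by linarith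
    have hc0 : 0 ≤ c := div_nonneg hs.le hst.le
    have hc1 : c ≤ 1 := (div_le_one hst).mpr (by linarith)
    have hkey : ∀ j, c * y1 j + (1 - c) * y2 j = y j := by
      intro j
      by_cases hja : j = a
      · subst hja; rw [hy1a, hy2a, hc]; field_simp; ring
      · by_cases hjb : j = b
        · subst hjb; rw [hy1b, hy2b, hc]; field_simp; ring
        · rw [hy1o j hja hjb, hy2o j hja hjb]; ring
    refine ⟨fun H => c * q1 H + (1 - c) * q2 H, ?_, ?_, ?_, ?_⟩
    · intro H
      exact add_nonneg (mul_nonneg hc0 (hq1pos H)) (mul_nonneg (by linarith) (hq2pos H))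
    · intro H hH
      by_cases h1 : q1 H = 0
      · have h2 : q2 H ≠ 0 := by
          intro h2; apply hH; simp [h1, h2]
        exact hq2supp H h2
      · exact hq1supp H h1
    · simp only [sum_add_distrib, ← mul_sum, hq1sum, hq2sum]
      ring
    · intro j hj
      have hrw : ∀ H : Finset ℕ, (if j ∈ H then (0:ℝ) else c * q1 H + (1 - c) * q2 H)
          = c * (if j ∈ H then (0:ℝ) else q1 H) + (1 - c) * (if j ∈ H then (0:ℝ) else q2 H) := by
        intro H; split <;> ring
      rw [sum_congr rfl (fun H _ => hrw H), sum_add_distrib, ← mul_sum, ← mul_sum,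
        hq1marg j hj, hq2marg j hj]
      have := hkey j
      linarith

/-- With `t*` a maximizer of `V(t) = (t-k)/(∑_{i=1}^t 1/r_i)` over
`k ≤ t ≤ n`, the Searcher strategy opening box `j ∈ [t*]` with probability
`(1/r_j)/(∑_{i=1}^{t*} 1/r_i)` guarantees expected payoff at least `V(t*)` against
every `k`-set `H` of trapped boxes; and there is a Hider mixed strategy over
`k`-subsets of `[n]` against which every box yields at most `V(t*)`.  Hence the
value of the 1-box-opening game is `max_{k ≤ t ≤ n} V(t) = V(t*)`.
Boxes are indexed `0,…,n-1`. -/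
theorem stmt_2 (n k : ℕ) (r : ℕ → ℝ)
    (hr : ∀ i < n, 0 < r i)
    (hmono : ∀ i j, i ≤ j → j < n → r j ≤ r i)
    (hk1 : 1 ≤ k) (hkn : k ≤ n - 1)
    (V : ℕ → ℝ) (hV : ∀ s, V s = ((s : ℝ) - k) / ∑ i ∈ Finset.range s, 1 / r i)
    (tstar : ℕ) (h1 : k ≤ tstar) (h2 : tstar ≤ n)
    (hmax : ∀ t, k ≤ t → t ≤ n → V t ≤ V tstar) :
    (∀ H : Finset ℕ, H ⊆ Finset.range n → H.card = k →
      V tstar ≤ ∑ j ∈ Finset.range tstar \ H,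
        ((1 / r j) / ∑ i ∈ Finset.range tstar, 1 / r i) * r j) ∧
    (∃ q : Finset ℕ → ℝ,
      (∀ H, 0 ≤ q H) ∧
      (∀ H, q H ≠ 0 → H ⊆ Finset.range n ∧ H.card = k) ∧
      (∑ H ∈ (Finset.range n).powerset, q H = 1) ∧
      (∀ j ∈ Finset.range n,
        (∑ H ∈ (Finset.range n).powerset, if j ∈ H then 0 else q H * r j)
          ≤ V tstar)) := by
  classical
  have hkn' : k < n := by omega
  have hrt : ∀ i < tstar, 0 < r i := fun i hi => hr i (lt_of_lt_of_le hi h2)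
  have hSpos : 0 < ∑ i ∈ Finset.range tstar, 1 / r i :=
    Finset.sum_pos (fun i hi => by
        have := hrt i (Finset.mem_range.mp hi); positivity)
      (by rw [Finset.nonempty_range_iff]; omega)
  set S : ℝ := ∑ i ∈ Finset.range tstar, 1 / r i with hSdef
  constructor
  · -- Part 1: Searcher guarantee
    intro H hHsub hHcard
    have hterm : ∀ j ∈ Finset.range tstar \ H, ((1 / r j) / S) * r j = 1 / S := by
      intro j hj
      have hj' : j < tstar := Finset.mem_range.mp (Finset.mem_sdiff.mp hj).1
      have hrj := hrt j hj'
      field_simp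
    rw [Finset.sum_congr rfl hterm, Finset.sum_const, nsmul_eq_mul]
    have hcard : tstar - k ≤ (Finset.range tstar \ H).card := by
      have h3 : Finset.range tstar \ H = Finset.range tstar \ (Finset.range tstar ∩ H) := by
        ext x; simp only [Finset.mem_sdiff, Finset.mem_inter]; tauto
      rw [h3, Finset.card_sdiff_of_subset Finset.inter_subset_left, Finset.card_range]
      have h4 : (Finset.range tstar ∩ H).card ≤ k :=
        hHcard ▸ Finset.card_le_card Finset.inter_subset_right
      omega
    have hcast : ((tstar : ℝ) - k) ≤ ((Finset.range tstar \ H).card : ℝ) := by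
      have h5 : ((tstar - k : ℕ) : ℝ) ≤ ((Finset.range tstar \ H).card : ℝ) := by
        exact_mod_cast hcard
      rwa [Nat.cast_sub h1] at h5
    rw [hV, mul_one_div, ← hSdef]
    gcongr
  · -- Part 2: Hider strategy
    have hVpos : 0 < V tstar := by
      have hVn : 0 < V n := by
        rw [hV]
        apply div_pos
        · have : (k : ℝ) < (n : ℝ) := Nat.cast_lt.mpr hkn'
          linarith
        · apply Finset.sum_pos (fun i hi => by
            have := hr i (Finset.mem_range.mp hi); positivity)
          rw [Finset.nonempty_range_iff]; omega
      exact lt_of_lt_of_le hVn (hmax n (le_of_lt hkn') le_rfl)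
    have hkt : k < tstar := by
      rcases lt_or_eq_of_le h1 with h | h
      · exact h
      · exfalso
        rw [hV, ← h] at hVpos
        simp at hVpos
    have hVS : V tstar * S = (tstar : ℝ) - k := by
      rw [hV]
      rw [← hSdef]; exact div_mul_cancel₀ _ hSpos.ne'
    -- Key A: boxes past tstar have small reward
    have hA : ∀ j, tstar ≤ j → j < n → r j ≤ V tstar := by
      intro j hj1 hj2
      have htn : tstar < n := lt_of_le_of_lt hj1 hj2
      have hrts : 0 < r tstar := hr tstar htn
      refine le_trans (hmono tstar j hj1 hj2) ?_
      have hmax' := hmax (tstar + 1) (by omega) (by omega)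
      rw [hV, hV] at hmax'
      rw [Finset.sum_range_succ, ← hSdef] at hmax'
      have hS'pos : 0 < S + 1 / r tstar := by positivity
      rw [div_le_div_iff₀ hS'pos hSpos] at hmax'
      push_cast at hmax'
      have hexp : ((tstar : ℝ) - k) * (S + 1 / r tstar)
          = ((tstar : ℝ) - k) * S + ((tstar : ℝ) - k) * (1 / r tstar) := by ring
      rw [hexp] at hmax'
      have hstep : S ≤ ((tstar : ℝ) - k) * (1 / r tstar) := by linarith
      rw [hV, le_div_iff₀ hSpos]
      calc r tstar * S ≤ r tstar * (((tstar : ℝ) - k) * (1 / r tstar)) :=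
            mul_le_mul_of_nonneg_left hstep hrts.le
        _ = (tstar : ℝ) - k := by field_simp
    -- Key B: boxes before tstar have reward at least V tstar
    have hBkey : ∀ j, j < tstar → V tstar ≤ r j := by
      intro j hj
      obtain ⟨u, hu⟩ : ∃ u, tstar = u + 1 := ⟨tstar - 1, by omega⟩
      have hju : j ≤ u := by omega
      have hun : u < n := by omega
      refine le_trans ?_ (hmono j u hju hun)
      have hru : 0 < r u := hr u hun
      have hSu : S = (∑ i ∈ Finset.range u, 1 / r i) + 1 / r u := by
        rw [hSdef, hu, Finset.sum_range_succ]
      have hSupos : 0 < ∑ i ∈ Finset.range u, 1 / r i := by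
        apply Finset.sum_pos (fun i hi => by
          have hi' := Finset.mem_range.mp hi
          have := hrt i (by omega : i < tstar); positivity)
        rw [Finset.nonempty_range_iff]; omega
      set Su : ℝ := ∑ i ∈ Finset.range u, 1 / r i with hSudef
      have hmax'' := hmax u (by omega) (by omega)
      rw [hV, hV, ← hSdef, ← hSudef] at hmax''
      rw [div_le_div_iff₀ hSupos hSpos] at hmax''
      rw [hSu] at hmax''
      have hexp : ((u : ℝ) - k) * (Su + 1 / r u)
          = ((u : ℝ) - k) * Su + ((u : ℝ) - k) * (1 / r u) := by ring
      rw [hexp] at hmax''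
      have htu : (tstar : ℝ) = (u : ℝ) + 1 := by rw [hu]; push_cast; ring
      have hstep : ((u : ℝ) - k) * (1 / r u) ≤ Su := by nlinarith
      have hstep2 : (u : ℝ) - k ≤ r u * Su := by
        calc (u : ℝ) - k = r u * (((u : ℝ) - k) * (1 / r u)) := by field_simp
          _ ≤ r u * Su := mul_le_mul_of_nonneg_left hstep hru.le
      rw [hV, ← hSdef, div_le_iff₀ hSpos, hSu]
      have : r u * (Su + 1 / r u) = r u * Su + 1 := by field_simp
      rw [this, htu]
      linarith
    -- define the marginals
    set y : ℕ → ℝ := fun j => if j < tstar then 1 - V tstar / r j else 0 with hy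
    have hyb : ∀ j < n, 0 ≤ y j ∧ y j ≤ 1 := by
      intro j hj
      by_cases hjt : j < tstar
      · have hrj := hrt j hjt
        have hVr := hBkey j hjt
        simp only [hy, if_pos hjt]
        constructor
        · have : V tstar / r j ≤ 1 := (div_le_one hrj).mpr hVr
          linarith
        · have : 0 ≤ V tstar / r j := div_nonneg hVpos.le hrj.le
          linarith
      · simp [hy, hjt]
    have hysum : ∑ j ∈ Finset.range n, y j = (k : ℝ) := by
      rw [← Finset.sum_subset (Finset.range_subset_range.mpr h2) (fun j _ hj => by
        simp only [hy]
        rw [if_neg (by simpa using hj)])]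
      have : ∑ j ∈ Finset.range tstar, y j
          = ∑ j ∈ Finset.range tstar, (1 - V tstar * (1 / r j)) := by
        apply Finset.sum_congr rfl
        intro j hj
        simp only [hy, if_pos (Finset.mem_range.mp hj)]
        ring
      rw [this, Finset.sum_sub_distrib, Finset.sum_const, Finset.card_range,
        ← Finset.mul_sum, ← hSdef, hVS]
      push_cast
      ring
    obtain ⟨q, hqpos, hqsupp, hqsum, hqmarg⟩ :=
      exists_hider_dist n k _ y rfl hyb hysum
    refine ⟨q, hqpos, hqsupp, hqsum, ?_⟩
    intro j hj
    have hjn := Finset.mem_range.mp hj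
    have hsplit : (∑ H ∈ (Finset.range n).powerset, if j ∈ H then (0:ℝ) else q H * r j)
        = (∑ H ∈ (Finset.range n).powerset, if j ∈ H then (0:ℝ) else q H) * r j := by
      rw [Finset.sum_mul]
      exact Finset.sum_congr rfl fun H _ => by split <;> ring
    rw [hsplit, hqmarg j hjn]
    by_cases hjt : j < tstar
    · have hrj := hrt j hjt
      have : (1 - y j) * r j = V tstar := by
        simp only [hy, if_pos hjt]
        field_simp; ring
      simp only [hy] at this ⊢
      rw [this]
    · have : (1 - y j) * r j = r j := by
        simp only [hy, if_neg hjt]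
        ring
      simp only [hy] at this ⊢
      rw [this]
      exact hA j (le_of_not_gt hjt) hjn
end

section
/- Let r_1 ≥ ... ≥ r_n > 0, k ≤ t* ≤ n with V(t*) = (t*-k)/(∑_{i=1}^{t*} 1/r_i) maximal over t ∈ {k,...,n}, and assume t* ≥ k+1. Define y_j = 1 - V(t*)/r_j for j ∈ [t*]. Then 0 ≤ y_j ≤ 1 for all j ∈ [t*] and ∑_{j=1}^{t*} y_j = k. -/
/-- With `t*` an argmax of `V` over `{k,…,n}` and `t* ≥ k+1`, the
numbers `y_j = 1 - V(t*)/r_j` for `j ∈ [t*]` satisfy `0 ≤ y_j ≤ 1` and sum to `k`.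
Boxes are indexed `0,…,n-1`. -/
theorem stmt_3 (n k : ℕ) (r : ℕ → ℝ)
    (hr : ∀ i < n, 0 < r i)
    (hmono : ∀ i j, i ≤ j → j < n → r j ≤ r i)
    (hk1 : 1 ≤ k) (hkn : k ≤ n - 1)
    (V : ℕ → ℝ) (hV : ∀ s, V s = ((s : ℝ) - k) / ∑ i ∈ Finset.range s, 1 / r i)
    (tstar : ℕ) (h1 : k ≤ tstar) (h2 : tstar ≤ n) (h3 : k + 1 ≤ tstar)
    (hmax : ∀ t, k ≤ t → t ≤ n → V t ≤ V tstar)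
    (y : ℕ → ℝ) (hy : ∀ j, y j = 1 - V tstar / r j) :
    (∀ j ∈ Finset.range tstar, 0 ≤ y j ∧ y j ≤ 1) ∧
    (∑ j ∈ Finset.range tstar, y j = k) := by
  obtain ⟨m, rfl⟩ : ∃ m, tstar = m + 1 := ⟨tstar - 1, by omega⟩
  have hrpos : ∀ j, j < m + 1 → 0 < r j := fun j hj => hr j (by omega)
  have hrm : 0 < r m := hrpos m (by omega)
  set S' : ℝ := ∑ i ∈ Finset.range m, 1 / r i with hS'def
  have hS' : 0 < S' := Finset.sum_pos
    (fun i hi => one_div_pos.mpr (hrpos i (by simp only [Finset.mem_range] at hi; omega)))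
    (Finset.nonempty_range_iff.mpr (by omega))
  have hSsucc : ∑ i ∈ Finset.range (m + 1), 1 / r i = S' + 1 / r m :=
    Finset.sum_range_succ _ _
  have hS : (0:ℝ) < S' + 1 / r m := by positivity
  -- key bound: V(t*) ≤ r m
  have hone : r m * (1 / r m) = 1 := mul_one_div_cancel hrm.ne'
  have key : V (m + 1) ≤ r m := by
    have h := hmax m (by omega) (by omega)
    rw [hV, hV, hSsucc] at h
    push_cast at h
    rw [div_le_div_iff₀ hS' hS] at h
    rw [hV, hSsucc]
    push_cast
    rw [div_le_iff₀ hS]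
    nlinarith [h, hone, hrm, hS']
  have hVnonneg : 0 ≤ V (m + 1) := by
    rw [hV, hSsucc]
    apply div_nonneg _ hS.le
    push_cast
    have : (k:ℝ) ≤ (m:ℝ) + 1 := by exact_mod_cast h1
    linarith
  constructor
  · intro j hj
    simp only [Finset.mem_range] at hj
    have hrj : 0 < r j := hrpos j hj
    have hrmj : r m ≤ r j := hmono j m (by omega) (by omega)
    constructor
    · rw [hy]
      have : V (m + 1) / r j ≤ 1 := (div_le_one hrj).mpr (le_trans key hrmj)
      linarith
    · rw [hy]
      have : 0 ≤ V (m + 1) / r j := div_nonneg hVnonneg hrj.le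
      linarith
  · have hsum : ∑ j ∈ Finset.range (m + 1), y j
        = (m + 1 : ℝ) - V (m + 1) * ∑ i ∈ Finset.range (m + 1), 1 / r i := by
      simp only [hy]
      rw [Finset.sum_sub_distrib, Finset.sum_const, Finset.card_range, nsmul_eq_mul, mul_one,
        Finset.mul_sum]
      push_cast
      congr 1
      exact Finset.sum_congr rfl fun j _ => (mul_one_div _ _).symm
    have hne : (∑ i ∈ Finset.range (m + 1), 1 / r i) ≠ 0 := by rw [hSsucc]; exact hS.ne'
    rw [hsum, hV, div_mul_cancel₀ _ hne]
    push_cast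
    ring
end

section
/- Let n ≥ 2 and 1 ≤ k ≤ n-1, and define F(m) = C(n-m, k)·m / C(n, k) for 0 ≤ m ≤ n-k. Then F(m+1) ≤ F(m) if and only if m ≥ (n-k)/(k+1), and consequently F is maximized at m* = ⌈(n-k)/(k+1)⌉. -/
private lemma choose_key (s k : ℕ) :
    (s + 1).choose k * (s + 1 - k) = s.choose k * (s + 1) := by
  have h1 := Nat.choose_succ_right_eq (s + 1) k
  have h2 := Nat.add_one_mul_choose_eq s k
  rw [← h1, ← h2, Nat.mul_comm]

/-- With `F(m) = C(n-m,k)·m/C(n,k)`, we have `F(m+1) ≤ F(m)` iff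
`m ≥ (n-k)/(k+1)`, and `F` is maximized over `0 ≤ m ≤ n-k` at
`m* = ⌈(n-k)/(k+1)⌉`. -/
theorem stmt_6 (n k : ℕ) (hn : 2 ≤ n) (hk1 : 1 ≤ k) (hkn : k ≤ n - 1)
    (F : ℕ → ℝ)
    (hF : ∀ m, F m = (((n - m).choose k : ℝ) * m) / (n.choose k : ℝ)) :
    (∀ m, m + 1 ≤ n - k → (F (m + 1) ≤ F m ↔ ((n : ℝ) - k) / ((k : ℝ) + 1) ≤ m)) ∧
    (∀ m, m ≤ n - k → F m ≤ F ⌈((n : ℝ) - k) / ((k : ℝ) + 1)⌉₊) := by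
  have hkn' : k ≤ n := le_trans hkn (Nat.sub_le n 1)
  have hC : (0:ℝ) < n.choose k := by exact_mod_cast Nat.choose_pos hkn'
  have key : ∀ m, m + 1 ≤ n - k →
      (F (m + 1) ≤ F m ↔ ((n : ℝ) - k) / ((k : ℝ) + 1) ≤ m) := by
    intro m hm
    have hmkn : m + k + 1 ≤ n := by omega
    have hsub : n - (m + 1) + 1 = n - m := by omega
    have hkc : k ≤ n - (m + 1) := by omega
    have hc : (0:ℝ) < ((n - (m + 1)).choose k : ℝ) := by
      exact_mod_cast Nat.choose_pos hkc
    have e1 : ((n - m : ℕ) : ℝ) = (n:ℝ) - m := Nat.cast_sub (by omega)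
    have e2 : ((n - m - k : ℕ) : ℝ) = (n:ℝ) - m - k := by
      rw [Nat.cast_sub (by omega : k ≤ n - m), e1]
    have hid : ((n - m).choose k : ℝ) * ((n:ℝ) - m - k)
        = ((n - (m + 1)).choose k : ℝ) * ((n:ℝ) - m) := by
      have h := choose_key (n - (m + 1)) k
      rw [hsub] at h
      rw [← e2, ← e1]
      exact_mod_cast h
    have hN : (0:ℝ) < (n:ℝ) - m := by
      have : (m:ℝ) + 1 ≤ n := by exact_mod_cast (by omega : m + 1 ≤ n)
      linarith
    have hNk : (0:ℝ) < (n:ℝ) - m - k := by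
      have : (m:ℝ) + k + 1 ≤ n := by exact_mod_cast hmkn
      linarith
    have hk0 : (0:ℝ) < (k:ℝ) + 1 := by positivity
    rw [hF (m + 1), hF m, div_le_div_iff_of_pos_right hC, div_le_iff₀ hk0]
    set c : ℝ := ((n - (m + 1)).choose k : ℝ)
    set A : ℝ := ((n - m).choose k : ℝ)
    push_cast
    constructor
    · intro h
      have h1 : c * (((m:ℝ) + 1) * ((n:ℝ) - m - k)) ≤ c * (((n:ℝ) - m) * m) := by
        calc c * (((m:ℝ) + 1) * ((n:ℝ) - m - k))
            = (c * ((m:ℝ) + 1)) * ((n:ℝ) - m - k) := by ring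
          _ ≤ (A * m) * ((n:ℝ) - m - k) := by
              exact mul_le_mul_of_nonneg_right h hNk.le
          _ = (A * ((n:ℝ) - m - k)) * m := by ring
          _ = (c * ((n:ℝ) - m)) * m := by rw [hid]
          _ = c * (((n:ℝ) - m) * m) := by ring
      have h2 : ((m:ℝ) + 1) * ((n:ℝ) - m - k) ≤ ((n:ℝ) - m) * m :=
        le_of_mul_le_mul_left h1 hc
      nlinarith [h2]
    · intro h
      have h2 : ((m:ℝ) + 1) * ((n:ℝ) - m - k) ≤ ((n:ℝ) - m) * m := by nlinarith [h]
      have h1 : (c * ((m:ℝ) + 1)) * ((n:ℝ) - m - k) ≤ (A * m) * ((n:ℝ) - m - k) := by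
        calc (c * ((m:ℝ) + 1)) * ((n:ℝ) - m - k)
            = c * (((m:ℝ) + 1) * ((n:ℝ) - m - k)) := by ring
          _ ≤ c * (((n:ℝ) - m) * m) := by
              exact mul_le_mul_of_nonneg_left h2 hc.le
          _ = (c * ((n:ℝ) - m)) * m := by ring
          _ = (A * ((n:ℝ) - m - k)) * m := by rw [hid]
          _ = (A * m) * ((n:ℝ) - m - k) := by ring
      exact le_of_mul_le_mul_right h1 hNk
  refine ⟨key, ?_⟩
  set q : ℝ := ((n : ℝ) - k) / ((k : ℝ) + 1) with hq
  set M : ℕ := ⌈q⌉₊ with hM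
  have hk0 : (0:ℝ) < (k:ℝ) + 1 := by positivity
  have hnk : ((n - k : ℕ) : ℝ) = (n:ℝ) - k := Nat.cast_sub hkn'
  have hMle : M ≤ n - k := by
    rw [hM, Nat.ceil_le, hnk, hq, div_le_iff₀ hk0]
    have hknR : (k:ℝ) ≤ n := by exact_mod_cast hkn'
    have hkR : (1:ℝ) ≤ k := by exact_mod_cast hk1
    nlinarith
  have mono_up : ∀ m, m < M → F m ≤ F (m + 1) := by
    intro m hm
    have h1 : m + 1 ≤ n - k := by omega
    have hlt : (m:ℝ) < q := Nat.lt_ceil.mp hm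
    exact le_of_lt (lt_of_not_ge fun h => absurd ((key m h1).mp h) (not_le.mpr hlt))
  have mono_down : ∀ m, M ≤ m → m + 1 ≤ n - k → F (m + 1) ≤ F m := by
    intro m hm h1
    refine (key m h1).mpr (le_trans (Nat.le_ceil q) ?_)
    exact_mod_cast hm
  have up : ∀ j m, m + j = M → F m ≤ F M := by
    intro j
    induction j with
    | zero => intro m h; simp at h; rw [h]
    | succ j ih =>
        intro m h
        have hmM : m < M := by omega
        exact le_trans (mono_up m hmM) (ih (m + 1) (by omega))
  have down : ∀ j m, m = M + j → m ≤ n - k → F m ≤ F M := by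
    intro j
    induction j with
    | zero => intro m h _; simp at h; rw [h]
    | succ j ih =>
        intro m h hle
        have h1 : F m ≤ F (M + j) := by
          have := mono_down (M + j) (by omega) (by omega)
          rw [show m = M + j + 1 by omega]
          exact this
        exact le_trans h1 (ih (M + j) rfl (by omega))
  intro m hm
  rcases le_or_gt m M with h | h
  · exact up (M - m) m (by omega)
  · exact down (m - M) m (by omega) hm
end

section
/- In the booby trap game on the complete hypergraph with n boxes each containing reward 1 and k booby traps (1 ≤ k ≤ n-1), the value equals U(n,k) = C(n-m*, k)·m*/C(n, k) where m* = ⌈(n-k)/(k+1)⌉; the Hider's uniform distribution on k-subsets and the Searcher's uniform distribution on m*-subsets are optimal. -/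
lemma bt_step_up (n k m : ℕ) (h : m * (k+1) < n - k) :
    m * (n - m).choose k ≤ (m+1) * (n - (m+1)).choose k := by
  have hexp : m * (k+1) = m*k + m := by ring
  have hmn : m + k + 1 ≤ n := by omega
  obtain ⟨b, hb⟩ : ∃ b, n = m + k + b + 1 := ⟨n - (m+k+1), by omega⟩
  subst hb
  have hs1 : m + k + b + 1 - m = k + b + 1 := by omega
  have hs2 : m + k + b + 1 - (m+1) = k + b := by omega
  rw [hs1, hs2]
  have hid : (k+b).choose k * (k+b+1) = (k+b+1).choose k * (b+1) := by
    have := Nat.choose_mul_succ_eq (k+b) k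
    simpa [show k+b+1-k = b+1 by omega] using this
  have hb' : m * k ≤ b := by omega
  have key : m * (k+b+1) ≤ (m+1) * (b+1) := by nlinarith
  apply Nat.le_of_mul_le_mul_right _ (show 0 < k+b+1 by omega)
  calc m * (k+b+1).choose k * (k+b+1) = (k+b+1).choose k * (m * (k+b+1)) := by ring
    _ ≤ (k+b+1).choose k * ((m+1)*(b+1)) := Nat.mul_le_mul_left _ key
    _ = (m+1) * ((k+b+1).choose k * (b+1)) := by ring
    _ = (m+1) * ((k+b).choose k * (k+b+1)) := by rw [hid]
    _ = (m+1) * (k+b).choose k * (k+b+1) := by ring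

lemma bt_step_down (n k m : ℕ) (hk : 1 ≤ k) (h : n - k ≤ m * (k+1)) :
    (m+1) * (n - (m+1)).choose k ≤ m * (n - m).choose k := by
  have hexp : m * (k+1) = m*k + m := by ring
  rcases lt_or_ge (n - (m+1)) k with hc | hc
  · simp [Nat.choose_eq_zero_of_lt hc]
  · have hmn : m + k + 1 ≤ n := by omega
    obtain ⟨b, hb⟩ : ∃ b, n = m + k + b + 1 := ⟨n - (m+k+1), by omega⟩
    subst hb
    have hs1 : m + k + b + 1 - m = k + b + 1 := by omega
    have hs2 : m + k + b + 1 - (m+1) = k + b := by omega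
    rw [hs1, hs2]
    have hid : (k+b).choose k * (k+b+1) = (k+b+1).choose k * (b+1) := by
      have := Nat.choose_mul_succ_eq (k+b) k
      simpa [show k+b+1-k = b+1 by omega] using this
    have hb' : b + 1 ≤ m * k := by omega
    have key : (m+1) * (b+1) ≤ m * (k+b+1) := by nlinarith
    apply Nat.le_of_mul_le_mul_right _ (show 0 < k+b+1 by omega)
    calc (m+1) * (k+b).choose k * (k+b+1) = (m+1) * ((k+b).choose k * (k+b+1)) := by ring
      _ = (k+b+1).choose k * ((m+1)*(b+1)) := by rw [hid]; ring
      _ ≤ (k+b+1).choose k * (m * (k+b+1)) := Nat.mul_le_mul_left _ key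
      _ = m * (k+b+1).choose k * (k+b+1) := by ring

lemma bt_max_at_mstar (n k mstar : ℕ) (hk : 1 ≤ k)
    (h1 : ∀ j, j < mstar → j*(k+1) < n-k) (h2 : n - k ≤ mstar*(k+1)) :
    ∀ m, m * (n-m).choose k ≤ mstar * (n-mstar).choose k := by
  have up : ∀ i, (mstar - i) * (n-(mstar-i)).choose k ≤ mstar * (n-mstar).choose k := by
    intro i
    induction i with
    | zero => simp
    | succ i ih =>
      rcases le_or_gt mstar i with hle | hlt
      · have : mstar - (i+1) = mstar - i := by omega
        rw [this]; exact ih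
      · have hstep := bt_step_up n k (mstar - (i+1)) (h1 _ (by omega))
        have : mstar - (i+1) + 1 = mstar - i := by omega
        rw [this] at hstep
        exact hstep.trans ih
  have down : ∀ i, (mstar + i) * (n-(mstar+i)).choose k ≤ mstar * (n-mstar).choose k := by
    intro i
    induction i with
    | zero => simp
    | succ i ih =>
      have hstep := bt_step_down n k (mstar + i) hk
        (h2.trans (Nat.mul_le_mul_right _ (by omega)))
      have : mstar + i + 1 = mstar + (i+1) := by omega
      rw [this] at hstep
      exact hstep.trans ih
  intro m
  rcases le_or_gt m mstar with hle | hlt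
  · have := up (mstar - m); rwa [show mstar - (mstar - m) = m by omega] at this
  · have := down (m - mstar); rwa [show mstar + (m - mstar) = m by omega] at this

lemma bt_choose_identity (n k m : ℕ) (h : m + k ≤ n) :
    n.choose m * (n - m).choose k = n.choose k * (n - k).choose m := by
  have hA := Nat.choose_mul (n := n) (k := m + k) (show m ≤ m + k by omega)
  have hB := Nat.choose_mul (n := n) (k := m + k) (show k ≤ m + k by omega)
  rw [show m + k - m = k by omega] at hA
  rw [show m + k - k = m by omega] at hB
  rw [show (m+k).choose k = (m+k).choose m from Nat.choose_symm_add.symm] at hB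
  rw [← hA]; exact hB

/-- Equal rewards (reward 1) on the complete hypergraph with `k` traps:
the value equals `U(n,k) = C(n-m*,k)·m*/C(n,k)` with `m* = ⌈(n-k)/(k+1)⌉`.
The Searcher's uniform distribution over `m*`-subsets guarantees at least `U(n,k)`
against every `k`-subset `H`; the Hider's uniform distribution over `k`-subsets
caps every Searcher set `S` (whose expected payoff is `|S|·C(n-|S|,k)/C(n,k)`)
at `U(n,k)`. -/
theorem stmt_7 (n k : ℕ) (hk1 : 1 ≤ k) (hkn : k ≤ n - 1) (hn : 1 ≤ n)
    (mstar : ℕ) (hm : mstar = ⌈((n : ℝ) - k) / ((k : ℝ) + 1)⌉₊)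
    (U : ℝ) (hU : U = (((n - mstar).choose k : ℝ) * mstar) / (n.choose k : ℝ)) :
    (∀ H : Finset ℕ, H ⊆ Finset.range n → H.card = k →
      U ≤ ∑ S ∈ (Finset.range n).powersetCard mstar,
            ((n.choose mstar : ℝ))⁻¹ * (if Disjoint S H then (S.card : ℝ) else 0)) ∧
    (∀ S : Finset ℕ, S ⊆ Finset.range n →
      (S.card : ℝ) * ((n - S.card).choose k : ℝ) / (n.choose k : ℝ) ≤ U) := by
  have hkn' : k ≤ n := by omega
  have hcast : ((n - k : ℕ) : ℝ) = (n:ℝ) - (k:ℝ) := Nat.cast_sub hkn'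
  have hkpos : (0:ℝ) < (k:ℝ) + 1 := by positivity
  have h2 : n - k ≤ mstar * (k+1) := by
    have hle := Nat.le_ceil (((n : ℝ) - k) / ((k : ℝ) + 1))
    rw [← hm, div_le_iff₀ hkpos] at hle
    have : ((n - k:ℕ):ℝ) ≤ ((mstar * (k+1) : ℕ):ℝ) := by
      rw [hcast]; push_cast; linarith
    exact_mod_cast this
  have h1 : ∀ j, j < mstar → j * (k+1) < n - k := by
    intro j hj
    rw [hm, Nat.lt_ceil, lt_div_iff₀ hkpos] at hj
    have : ((j*(k+1):ℕ):ℝ) < ((n-k:ℕ):ℝ) := by rw [hcast]; push_cast; linarith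
    exact_mod_cast this
  have hms_le : mstar ≤ n - k := by
    rw [hm]
    apply Nat.ceil_le.mpr
    rw [div_le_iff₀ hkpos, ← hcast]
    have h0 : (0:ℝ) ≤ ((n-k:ℕ):ℝ) := by positivity
    have h1' : (1:ℝ) ≤ (k:ℝ)+1 := by
      have : (1:ℝ) ≤ (k:ℝ) := by exact_mod_cast hk1
      linarith
    nlinarith
  have hmk : mstar + k ≤ n := by omega
  have hCnk : 0 < n.choose k := Nat.choose_pos hkn'
  have hCnm : 0 < n.choose mstar := Nat.choose_pos (by omega)
  have hid := bt_choose_identity n k mstar hmk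
  have hidR : ((n.choose mstar : ℝ)) * (((n-mstar).choose k : ℝ))
      = (n.choose k : ℝ) * ((n-k).choose mstar : ℝ) := by exact_mod_cast hid
  have hUeq : U = ((n.choose mstar : ℝ))⁻¹ * (((n-k).choose mstar : ℝ) * mstar) := by
    rw [hU]
    have hc1 : ((n.choose k : ℝ)) ≠ 0 := by positivity
    have hc2 : ((n.choose mstar : ℝ)) ≠ 0 := by positivity
    field_simp
    linear_combination (mstar:ℝ) * hidR
  constructor
  · intro H hH hHcard
    have hfilter : ((Finset.range n).powersetCard mstar).filter (fun S => Disjoint S H)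
        = (Finset.range n \ H).powersetCard mstar := by
      ext S
      simp only [Finset.mem_filter, Finset.mem_powersetCard, Finset.subset_sdiff]
      tauto
    have hcardsd : (Finset.range n \ H).card = n - k := by
      rw [Finset.card_sdiff_of_subset hH, Finset.card_range, hHcard]
    have hsum : ∑ S ∈ (Finset.range n).powersetCard mstar,
          ((n.choose mstar : ℝ))⁻¹ * (if Disjoint S H then (S.card : ℝ) else 0)
        = ((n.choose mstar : ℝ))⁻¹ * (((n-k).choose mstar : ℝ) * mstar) := by
      rw [← Finset.mul_sum]
      congr 1
      have hrepl : ∀ S ∈ (Finset.range n).powersetCard mstar,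
          (if Disjoint S H then (S.card : ℝ) else 0)
            = (if Disjoint S H then (mstar : ℝ) else 0) := by
        intro S hS
        rw [(Finset.mem_powersetCard.mp hS).2]
      rw [Finset.sum_congr rfl hrepl, ← Finset.sum_filter, hfilter, Finset.sum_const,
        Finset.card_powersetCard, hcardsd, nsmul_eq_mul]
    rw [hsum, hUeq]
  · intro S hS
    have hmax := bt_max_at_mstar n k mstar hk1 h1 h2 S.card
    have h' : ((S.card : ℝ)) * (((n - S.card).choose k : ℝ))
        ≤ ((n - mstar).choose k : ℝ) * mstar := by
      have hc : ((S.card * (n - S.card).choose k : ℕ) : ℝ)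
          ≤ ((mstar * (n - mstar).choose k : ℕ) : ℝ) := Nat.cast_le.mpr hmax
      push_cast at hc
      linarith
    rw [hU]
    gcongr
end

section
/- Let r_1,...,r_n > 0 with total R_0 = ∑_i r_i, and let S* ⊆ [n] minimize |r(S) - r(S̄)| over all subsets S, where r(S) = ∑_{i∈S} r_i and S̄ is the complement. In the booby trap game on the complete hypergraph with k = 1 trap, the value equals r(S*)·r(S̄*)/R_0; the Searcher's strategy choosing S* with probability r(S̄*)/R_0 and S̄* otherwise, and the Hider's strategy trapping box i with probability r_i/R_0, are optimal. -/
/-- `k = 1` on the complete hypergraph.  With `S*` minimizing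
`|r(S) - r(S̄)|`, the value equals `r(S*)·r(S̄*)/R₀`.  The Searcher strategy
choosing `S*` with probability `r(S̄*)/R₀` and otherwise `S̄*` guarantees at
least this against every trapped box `i`; the Hider strategy trapping box `i`
with probability `r_i/R₀` caps every Searcher set `S` at this value. -/
theorem stmt_11 (n : ℕ) (hn : 1 ≤ n) (r : ℕ → ℝ) (hr : ∀ i < n, 0 < r i)
    (R0 : ℝ) (hR0 : R0 = ∑ i ∈ Finset.range n, r i)
    (Sstar : Finset ℕ) (hSsub : Sstar ⊆ Finset.range n)
    (hSmin : ∀ S : Finset ℕ, S ⊆ Finset.range n →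
      |(∑ i ∈ Sstar, r i) - ∑ i ∈ Finset.range n \ Sstar, r i| ≤
        |(∑ i ∈ S, r i) - ∑ i ∈ Finset.range n \ S, r i|)
    (V : ℝ)
    (hV : V = (∑ i ∈ Sstar, r i) * (∑ i ∈ Finset.range n \ Sstar, r i) / R0) :
    (∀ i ∈ Finset.range n,
      V ≤ (if i ∈ Sstar then 0
            else ((∑ j ∈ Finset.range n \ Sstar, r j) / R0) * ∑ j ∈ Sstar, r j)
          + (if i ∈ Finset.range n \ Sstar then 0
            else ((∑ j ∈ Sstar, r j) / R0) * ∑ j ∈ Finset.range n \ Sstar, r j)) ∧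
    (∀ S : Finset ℕ, S ⊆ Finset.range n →
      (∑ i ∈ Finset.range n \ S, (r i / R0) * ∑ j ∈ S, r j) ≤ V) := by
  have hR0pos : 0 < R0 := by
    rw [hR0]
    exact Finset.sum_pos (fun i hi => hr i (Finset.mem_range.mp hi))
      ⟨0, Finset.mem_range.mpr hn⟩
  have hsplit : ∀ S : Finset ℕ, S ⊆ Finset.range n →
      ∑ i ∈ Finset.range n \ S, r i = R0 - ∑ i ∈ S, r i := by
    intro S hS
    rw [hR0, Finset.sum_sdiff_eq_sub hS]
  have hb := hsplit _ hSsub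
  constructor
  · intro i hi
    by_cases h : i ∈ Sstar
    · have h2 : i ∉ Finset.range n \ Sstar := by simp [h]
      rw [if_pos h, if_neg h2, hV, hb]
      rw [zero_add]
      apply le_of_eq
      field_simp
    · have h2 : i ∈ Finset.range n \ Sstar := Finset.mem_sdiff.mpr ⟨hi, h⟩
      rw [if_neg h, if_pos h2, hV, hb]
      rw [add_zero]
      apply le_of_eq
      field_simp
  · intro S hS
    have hmin := hSmin S hS
    rw [hb, hsplit S hS] at hmin
    have hsq : ((∑ i ∈ Sstar, r i) - (R0 - ∑ i ∈ Sstar, r i))^2 ≤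
        ((∑ i ∈ S, r i) - (R0 - ∑ i ∈ S, r i))^2 := by
      have := pow_le_pow_left₀ (abs_nonneg _) hmin 2
      simpa [sq_abs] using this
    have hLHS : ∑ i ∈ Finset.range n \ S, (r i / R0) * ∑ j ∈ S, r j
        = (R0 - ∑ i ∈ S, r i) * (∑ j ∈ S, r j) / R0 := by
      rw [← Finset.sum_mul, ← Finset.sum_div, hsplit S hS, div_mul_eq_mul_div]
    rw [hLHS, hV, hb, div_le_div_iff₀ hR0pos hR0pos]
    nlinarith [hR0pos]
end

section
/- If r_1 ≥ r_2 ≥ r_3 ≥ r_4 > 0 and 1/r_1 + 1/r_2 ≥ 1/r_3 + 1/r_4 - 2/(r_3+r_4), then for every permutation (i,j,k,l) of (1,2,3,4): 1/r_i + 1/r_j ≥ 1/r_k + 1/r_l - 2/(r_k+r_l). -/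
/-!
Write `a ≥ b ≥ c ≥ d > 0` for the sorted values and `g x y = 1/x + 1/y - 2/(x+y)`, so that the
claim is `g x y ≤ 1/u + 1/v` for every split of the values into pairs `{x, y}`, `{u, v}`.
Since `2/(x+y) ≥ 1/max x y`, we have `g x y ≤ 1/min x y ≤ 1/d`, which settles every split with `d`
among `u, v`. Otherwise `{x, y}` is `{c, d}` (the hypothesis), `{b, d}` or `{a, d}`, and the last
two follow from the hypothesis because `t ↦ 1/t - 1/(t+d)` is decreasing.
-/

theorem one_div_sub_one_div_add_le {c d x : ℝ} (hc : 0 < c) (hd : 0 < d) (hcx : c ≤ x) :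
    1 / x - 1 / (x + d) ≤ 1 / c - 1 / (c + d) := by
  have hx : 0 < x := hc.trans_le hcx
  have hdiff : ∀ t : ℝ, 0 < t → 1 / t - 1 / (t + d) = d / (t * (t + d)) := fun t ht => by
    field_simp
    ring
  rw [hdiff x hx, hdiff c hc]
  gcongr

theorem one_div_add_one_div_sub_le_of_le {x y u w : ℝ} (hw : 0 < w) (hwy : w ≤ y) (hyx : y ≤ x)
    (hu : 0 < u) : 1 / x + 1 / y - 2 / (x + y) ≤ 1 / u + 1 / w := by
  have hy : 0 < y := hw.trans_le hwy
  have hx : 0 < x := hy.trans_le hyx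
  have harm : 1 / x ≤ 2 / (x + y) := by
    rw [div_le_div_iff₀ hx (by positivity)]
    linarith
  have hyw : 1 / y ≤ 1 / w := one_div_le_one_div_of_le hw hwy
  have hu' : 0 < 1 / u := by positivity
  linarith

theorem one_div_add_one_div_sub_le_of_exchange {c d x y : ℝ} (hc : 0 < c) (hd : 0 < d)
    (hcx : c ≤ x) (h : 1 / c + 1 / d - 2 / (c + d) ≤ 1 / y + 1 / x) :
    1 / x + 1 / d - 2 / (x + d) ≤ 1 / y + 1 / c := by
  have hdec := one_div_sub_one_div_add_le hc hd hcx
  have hx : 2 / (x + d) = 2 * (1 / (x + d)) := by ring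
  have hc' : 2 / (c + d) = 2 * (1 / (c + d)) := by ring
  linarith

theorem Fin.forall_perm_four {P : Fin 4 → Fin 4 → Fin 4 → Fin 4 → Prop}
    (hswap_left : ∀ i j k l, P i j k l → P j i k l)
    (hswap_right : ∀ i j k l, P i j k l → P i j l k)
    (h01 : P 2 3 0 1) (h02 : P 1 3 0 2) (h03 : P 1 2 0 3)
    (h12 : P 0 3 1 2) (h13 : P 0 2 1 3) (h23 : P 0 1 2 3)
    (σ : Equiv.Perm (Fin 4)) : P (σ 0) (σ 1) (σ 2) (σ 3) := by
  have hdistinct : ∀ i j k l : Fin 4,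
      i ≠ j → i ≠ k → i ≠ l → j ≠ k → j ≠ l → k ≠ l → P i j k l := by
    intro i j k l
    fin_cases i <;> fin_cases j <;> fin_cases k <;> fin_cases l <;> simp <;>
      first
        | assumption
        | apply hswap_left; assumption
        | apply hswap_right; assumption
        | apply hswap_left; apply hswap_right; assumption
  apply hdistinct <;> simp [σ.injective.ne_iff]

/-- Lemma 3.1: if `r 0 ≥ r 1 ≥ r 2 ≥ r 3 > 0` and
`1/r₁ + 1/r₂ ≥ 1/r₃ + 1/r₄ - 2/(r₃+r₄)` holds for the identity ordering,
then the analogous inequality holds for every permutation of the indices. -/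
theorem stmt_15 (r : Fin 4 → ℝ)
    (hpos : ∀ i, 0 < r i) (hmono : ∀ i j : Fin 4, i ≤ j → r j ≤ r i)
    (h : 1 / r 2 + 1 / r 3 - 2 / (r 2 + r 3) ≤ 1 / r 0 + 1 / r 1)
    (σ : Equiv.Perm (Fin 4)) :
    1 / r (σ 2) + 1 / r (σ 3) - 2 / (r (σ 2) + r (σ 3)) ≤
      1 / r (σ 0) + 1 / r (σ 1) := by
  have h10 := hmono 0 1 (by decide)
  have h20 := hmono 0 2 (by decide)
  have h21 := hmono 1 2 (by decide)
  have h31 := hmono 1 3 (by decide)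
  have h32 := hmono 2 3 (by decide)
  refine Fin.forall_perm_four
    (P := fun i j k l => 1 / r k + 1 / r l - 2 / (r k + r l) ≤ 1 / r i + 1 / r j)
    (fun _ _ _ _ hP => hP.trans_eq (add_comm _ _))
    (fun _ _ k l hP => by rwa [add_comm (1 / r l), add_comm (r l)])
    ?_ ?_ ?_ ?_ ?_ h σ
  · exact one_div_add_one_div_sub_le_of_le (hpos 3) h31 h10 (hpos 2)
  · exact one_div_add_one_div_sub_le_of_le (hpos 3) h32 h20 (hpos 1)
  · exact one_div_add_one_div_sub_le_of_exchange (hpos 2) (hpos 3) h20 (h.trans_eq (add_comm _ _))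
  · exact one_div_add_one_div_sub_le_of_le (hpos 3) h32 h21 (hpos 0)
  · exact one_div_add_one_div_sub_le_of_exchange (hpos 2) (hpos 3) h21 h
end

section
/- If r_1 ≥ r_2 ≥ r_3 ≥ r_4 > 0 and 1/r_4 ≤ 1/(r_1+r_4) + 1/(r_2+r_4) + 1/(r_3+r_4), then for every permutation (i,j,k,l) of (1,2,3,4): 1/r_l ≤ 1/(r_i+r_l) + 1/(r_j+r_l) + 1/(r_k+r_l). Equivalently, the hypothesis is equivalent to r_1 r_2 r_3 ≤ (r_1+r_2+r_3+r_4+r_4)·r_4². -/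
/-!
Clearing denominators, `1/d ≤ 1/(a+d) + 1/(b+d) + 1/(c+d)` becomes `abc ≤ (a+b+c+2d) d²`, and after
multiplying by `d` it reads `abcd ≤ (s + d) d³` with `s = a+b+c+d`. The left side and `s` do not
depend on which of the four numbers plays the role of `d`, while the right side increases with `d`;
so the inequality for the smallest number implies it for all the others.
-/

theorem one_div_le_sum_one_div_add_iff {a b c d : ℝ} (ha : 0 ≤ a) (hb : 0 ≤ b) (hc : 0 ≤ c)
    (hd : 0 < d) :
    1 / d ≤ 1 / (a + d) + 1 / (b + d) + 1 / (c + d) ↔ a * b * c ≤ (a + b + c + d + d) * d ^ 2 := by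
  have had : 0 < a + d := by positivity
  have hbd : 0 < b + d := by positivity
  have hcd : 0 < c + d := by positivity
  rw [div_add_div _ _ had.ne' hbd.ne', div_add_div _ _ (mul_pos had hbd).ne' hcd.ne',
    div_le_div_iff₀ hd (by positivity)]
  constructor <;> intro h <;> linarith

theorem one_div_le_sum_one_div_add_iff_mul_le {a b c d : ℝ} (ha : 0 ≤ a) (hb : 0 ≤ b)
    (hc : 0 ≤ c) (hd : 0 < d) :
    1 / d ≤ 1 / (a + d) + 1 / (b + d) + 1 / (c + d) ↔
      a * b * c * d ≤ (a + b + c + d + d) * d ^ 3 := by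
  rw [one_div_le_sum_one_div_add_iff ha hb hc hd, ← mul_le_mul_iff_of_pos_right hd]
  ring_nf

theorem add_mul_pow_three_le_add_mul_pow_three {s d d' : ℝ} (hs : 0 ≤ s) (hd : 0 ≤ d)
    (hdd' : d ≤ d') : (s + d) * d ^ 3 ≤ (s + d') * d' ^ 3 := by
  gcongr
  linarith

/-- Lemma 3.2: if `r 0 ≥ r 1 ≥ r 2 ≥ r 3 > 0` and
`1/r₄ ≤ 1/(r₁+r₄) + 1/(r₂+r₄) + 1/(r₃+r₄)`, then the analogous inequality holds
for every permutation of the indices; moreover the hypothesis is equivalent to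
`r₁ r₂ r₃ ≤ (r₁+r₂+r₃+r₄+r₄)·r₄²`. -/
theorem stmt_16 (r : Fin 4 → ℝ)
    (hpos : ∀ i, 0 < r i) (hmono : ∀ i j : Fin 4, i ≤ j → r j ≤ r i) :
    ((1 / r 3 ≤ 1 / (r 0 + r 3) + 1 / (r 1 + r 3) + 1 / (r 2 + r 3)) →
      ∀ σ : Equiv.Perm (Fin 4),
        1 / r (σ 3) ≤ 1 / (r (σ 0) + r (σ 3)) + 1 / (r (σ 1) + r (σ 3)) +
          1 / (r (σ 2) + r (σ 3))) ∧
    ((1 / r 3 ≤ 1 / (r 0 + r 3) + 1 / (r 1 + r 3) + 1 / (r 2 + r 3)) ↔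
      r 0 * r 1 * r 2 ≤ (r 0 + r 1 + r 2 + r 3 + r 3) * (r 3) ^ 2) := by
  have hnonneg i : 0 ≤ r i := (hpos i).le
  have criterion (σ : Equiv.Perm (Fin 4)) :
      1 / r (σ 3) ≤ 1 / (r (σ 0) + r (σ 3)) + 1 / (r (σ 1) + r (σ 3)) +
          1 / (r (σ 2) + r (σ 3)) ↔ ∏ i, r i ≤ (∑ i, r i + r (σ 3)) * r (σ 3) ^ 3 := by
    rw [one_div_le_sum_one_div_add_iff_mul_le (hnonneg _) (hnonneg _) (hnonneg _) (hpos _),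
      ← Equiv.prod_comp σ, ← Equiv.sum_comp σ, Fin.prod_univ_four, Fin.sum_univ_four]
  refine ⟨fun h σ ↦ (criterion σ).2 ?_,
    one_div_le_sum_one_div_add_iff (hnonneg 0) (hnonneg 1) (hnonneg 2) (hpos 3)⟩
  calc ∏ i, r i ≤ (∑ i, r i + r 3) * r 3 ^ 3 := by simpa using (criterion 1).1 h
    _ ≤ (∑ i, r i + r (σ 3)) * r (σ 3) ^ 3 :=
      add_mul_pow_three_le_add_mul_pow_three (Finset.sum_nonneg fun i _ ↦ hnonneg i)
        (hnonneg 3) (hmono _ _ (Fin.le_last _))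
end

section
/- Let r_1 ≥ r_2 ≥ r_3 ≥ r_4 > 0 satisfy 1/(r_1+r_4) + 1/(r_2+r_4) + 1/(r_3+r_4) ≤ 1/r_4 and 1/r_1 + 1/r_2 + 1/(r_3+r_4) ≥ 1/r_3 + 1/(r_1+r_4) + 1/(r_2+r_4). Define V_C = 2/(1/r_1 + 1/r_2 + 1/r_3 + 1/(r_1+r_4) + 1/(r_2+r_4) + 1/(r_3+r_4)), and set q_{12} = V_C/(r_3+r_4), q_{13} = V_C/(r_2+r_4), q_{23} = V_C/(r_1+r_4), q_{14} = 1 - V_C/(r_2+r_4) - V_C/(r_3+r_4) - V_C/r_1, q_{24} = 1 - V_C/(r_1+r_4) - V_C/(r_3+r_4) - V_C/r_2, q_{34} = 1 - V_C/(r_1+r_4) - V_C/(r_2+r_4) - V_C/r_3. Then all q_{ij} ∈ [0,1], ∑_{1≤i<j≤4} q_{ij} = 1, and for every nonempty S ⊆ {1,2,3,4} with |S| ≤ 2, the expected payoff r(S)·∑_{\{i,j\}: \{i,j\}∩S = ∅} q_{ij} is at most V_C. -/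
private lemma aux_mono17 {x y d : ℝ} (hx : 0 < x) (hxy : x ≤ y) (hd : 0 ≤ d) :
    1/y - 1/(y+d) ≤ 1/x - 1/(x+d) := by
  have hy : 0 < y := hx.trans_le hxy
  have hxd : 0 < x + d := by linarith
  have hyd : 0 < y + d := by linarith
  have h1 : 1/x - 1/(x+d) = d/(x*(x+d)) := by field_simp; try ring
  have h2 : 1/y - 1/(y+d) = d/(y*(y+d)) := by field_simp; try ring
  rw [h1, h2]
  exact div_le_div_of_nonneg_left hd (by positivity) (by nlinarith)

set_option maxHeartbeats 4000000 in
/-- the explicit Hider mixed strategy over pairs of trapped boxes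
is a probability distribution and caps the Searcher's expected payoff at `V_C`
for every nonempty opened set `S` with `|S| ≤ 2`.  Boxes `1,2,3,4` are indexed
`0,1,2,3 : Fin 4`. -/
theorem stmt_17 (r : Fin 4 → ℝ)
    (hpos : ∀ i, 0 < r i) (hmono : ∀ i j : Fin 4, i ≤ j → r j ≤ r i)
    (h1 : 1 / (r 0 + r 3) + 1 / (r 1 + r 3) + 1 / (r 2 + r 3) ≤ 1 / r 3)
    (h2 : 1 / r 2 + 1 / (r 0 + r 3) + 1 / (r 1 + r 3) ≤
      1 / r 0 + 1 / r 1 + 1 / (r 2 + r 3))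
    (VC : ℝ)
    (hVC : VC = 2 / (1 / r 0 + 1 / r 1 + 1 / r 2 + 1 / (r 0 + r 3) +
      1 / (r 1 + r 3) + 1 / (r 2 + r 3)))
    (q : Finset (Fin 4) → ℝ)
    (hq : q = fun P =>
      if P = {0, 1} then VC / (r 2 + r 3)
      else if P = {0, 2} then VC / (r 1 + r 3)
      else if P = {1, 2} then VC / (r 0 + r 3)
      else if P = {0, 3} then 1 - VC / (r 1 + r 3) - VC / (r 2 + r 3) - VC / r 0
      else if P = {1, 3} then 1 - VC / (r 0 + r 3) - VC / (r 2 + r 3) - VC / r 1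
      else if P = {2, 3} then 1 - VC / (r 0 + r 3) - VC / (r 1 + r 3) - VC / r 2
      else 0) :
    (∀ P ∈ (Finset.univ : Finset (Fin 4)).powersetCard 2, 0 ≤ q P ∧ q P ≤ 1) ∧
    (∑ P ∈ (Finset.univ : Finset (Fin 4)).powersetCard 2, q P = 1) ∧
    (∀ S : Finset (Fin 4), S.Nonempty → S.card ≤ 2 →
      (∑ i ∈ S, r i) *
        (∑ P ∈ ((Finset.univ : Finset (Fin 4)).powersetCard 2).filter
          (fun P => Disjoint P S), q P) ≤ VC) := by
  have ha : 0 < r 0 := hpos 0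
  have hb : 0 < r 1 := hpos 1
  have hc : 0 < r 2 := hpos 2
  have hd : 0 < r 3 := hpos 3
  have hba : r 1 ≤ r 0 := hmono 0 1 (by decide)
  have hcb : r 2 ≤ r 1 := hmono 1 2 (by decide)
  have hdc : r 3 ≤ r 2 := hmono 2 3 (by decide)
  have hca : r 2 ≤ r 0 := hcb.trans hba
  have hda : r 3 ≤ r 0 := hdc.trans hca
  have hdb : r 3 ≤ r 1 := hdc.trans hcb
  have had : 0 < r 0 + r 3 := by linarith
  have hbd : 0 < r 1 + r 3 := by linarith
  have hcd : 0 < r 2 + r 3 := by linarith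
  have hVCpos : 0 < VC := by rw [hVC]; positivity
  have hVCS : VC * (1 / r 0 + 1 / r 1 + 1 / r 2 + 1 / (r 0 + r 3) +
      1 / (r 1 + r 3) + 1 / (r 2 + r 3)) = 2 := by
    rw [hVC]; field_simp
  -- unit facts
  have ua1 : r 0 * (1 / r 0) = 1 := by field_simp
  have ub1 : r 1 * (1 / r 1) = 1 := by field_simp
  have uc1 : r 2 * (1 / r 2) = 1 := by field_simp
  have ud1 : r 3 * (1 / r 3) = 1 := by field_simp
  have uad1 : (r 0 + r 3) * (1 / (r 0 + r 3)) = 1 := by field_simp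
  have ubd1 : (r 1 + r 3) * (1 / (r 1 + r 3)) = 1 := by field_simp
  have ucd1 : (r 2 + r 3) * (1 / (r 2 + r 3)) = 1 := by field_simp
  -- difference formulas
  have da' : 1 / r 0 - 1 / (r 0 + r 3) = r 3 / (r 0 * (r 0 + r 3)) := by
    field_simp; try ring
  have db' : 1 / r 1 - 1 / (r 1 + r 3) = r 3 / (r 1 * (r 1 + r 3)) := by
    field_simp; try ring
  have dc' : 1 / r 2 - 1 / (r 2 + r 3) = r 3 / (r 2 * (r 2 + r 3)) := by
    field_simp; try ring
  -- monotonicity of the differences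
  have m_ba : 1 / r 0 - 1 / (r 0 + r 3) ≤ 1 / r 1 - 1 / (r 1 + r 3) :=
    aux_mono17 hb hba hd.le
  have m_cb : 1 / r 1 - 1 / (r 1 + r 3) ≤ 1 / r 2 - 1 / (r 2 + r 3) :=
    aux_mono17 hc hcb hd.le
  have m_ca : 1 / r 0 - 1 / (r 0 + r 3) ≤ 1 / r 2 - 1 / (r 2 + r 3) :=
    m_ba.trans m_cb
  have nn_a : 0 ≤ 1 / r 0 - 1 / (r 0 + r 3) := by rw [da']; positivity
  have nn_b : 0 ≤ 1 / r 1 - 1 / (r 1 + r 3) := by rw [db']; positivity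
  have nn_c : 0 ≤ 1 / r 2 - 1 / (r 2 + r 3) := by rw [dc']; positivity
  -- inverses positivity
  have ia : 0 < 1 / r 0 := by positivity
  have ib : 0 < 1 / r 1 := by positivity
  have ic : 0 < 1 / r 2 := by positivity
  have iad : 0 < 1 / (r 0 + r 3) := by positivity
  have ibd : 0 < 1 / (r 1 + r 3) := by positivity
  have icd : 0 < 1 / (r 2 + r 3) := by positivity
  -- q at the six pairs
  have q01 : q {0, 1} = VC / (r 2 + r 3) := by rw [hq]; norm_num
  have q02 : q {0, 2} = VC / (r 1 + r 3) := by
    rw [hq]; norm_num [show ({0, 2} : Finset (Fin 4)) ≠ {0, 1} from by decide]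
  have q12 : q {1, 2} = VC / (r 0 + r 3) := by
    rw [hq]; norm_num [show ({1, 2} : Finset (Fin 4)) ≠ {0, 1} from by decide, show ({1, 2} : Finset (Fin 4)) ≠ {0, 2} from by decide]
  have q03 : q {0, 3} = 1 - VC / (r 1 + r 3) - VC / (r 2 + r 3) - VC / r 0 := by
    rw [hq]; norm_num [show ({0, 3} : Finset (Fin 4)) ≠ {0, 1} from by decide, show ({0, 3} : Finset (Fin 4)) ≠ {0, 2} from by decide, show ({0, 3} : Finset (Fin 4)) ≠ {1, 2} from by decide]
  have q13 : q {1, 3} = 1 - VC / (r 0 + r 3) - VC / (r 2 + r 3) - VC / r 1 := by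
    rw [hq]; norm_num [show ({1, 3} : Finset (Fin 4)) ≠ {0, 1} from by decide, show ({1, 3} : Finset (Fin 4)) ≠ {0, 2} from by decide, show ({1, 3} : Finset (Fin 4)) ≠ {1, 2} from by decide,
      show ({1, 3} : Finset (Fin 4)) ≠ {0, 3} from by decide]
  have q23 : q {2, 3} = 1 - VC / (r 0 + r 3) - VC / (r 1 + r 3) - VC / r 2 := by
    rw [hq]; norm_num [show ({2, 3} : Finset (Fin 4)) ≠ {0, 1} from by decide, show ({2, 3} : Finset (Fin 4)) ≠ {0, 2} from by decide, show ({2, 3} : Finset (Fin 4)) ≠ {1, 2} from by decide,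
      show ({2, 3} : Finset (Fin 4)) ≠ {0, 3} from by decide, show ({2, 3} : Finset (Fin 4)) ≠ {1, 3} from by decide]
  -- upper bounds VC/(x+d) ≤ 1
  have f1 : 1 / (r 0 + r 3) ≤ 1 / r 0 := by linarith only [nn_a]
  have f2 : 1 / (r 1 + r 3) ≤ 1 / r 1 := by linarith only [nn_b]
  have f3 : 1 / (r 2 + r 3) ≤ 1 / r 2 := by linarith only [nn_c]
  have le1 : VC / (r 0 + r 3) ≤ 1 := by
    rw [div_eq_mul_one_div VC (r 0 + r 3)]
    linarith only [hVCS, mul_le_mul_of_nonneg_left f1 hVCpos.le,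
      mul_pos hVCpos ib, mul_pos hVCpos ic, mul_pos hVCpos ibd,
      mul_pos hVCpos icd, mul_pos hVCpos iad]
  have le2 : VC / (r 1 + r 3) ≤ 1 := by
    rw [div_eq_mul_one_div VC (r 1 + r 3)]
    linarith only [hVCS, mul_le_mul_of_nonneg_left f2 hVCpos.le,
      mul_pos hVCpos ia, mul_pos hVCpos ic, mul_pos hVCpos iad,
      mul_pos hVCpos icd, mul_pos hVCpos ibd]
  have le3 : VC / (r 2 + r 3) ≤ 1 := by
    rw [div_eq_mul_one_div VC (r 2 + r 3)]
    linarith only [hVCS, mul_le_mul_of_nonneg_left f3 hVCpos.le,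
      mul_pos hVCpos ia, mul_pos hVCpos ib, mul_pos hVCpos iad,
      mul_pos hVCpos ibd, mul_pos hVCpos icd]
  -- nonnegativity of the three remaining weights
  have kq14 : 1 / (r 1 + r 3) + 1 / (r 2 + r 3) + 1 / r 0 ≤
      1 / r 1 + 1 / r 2 + 1 / (r 0 + r 3) := by linarith only [m_ca, nn_b]
  have kq24 : 1 / (r 0 + r 3) + 1 / (r 2 + r 3) + 1 / r 1 ≤
      1 / r 0 + 1 / r 2 + 1 / (r 1 + r 3) := by linarith only [m_cb, nn_a]
  have ge14 : 0 ≤ 1 - VC / (r 1 + r 3) - VC / (r 2 + r 3) - VC / r 0 := by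
    rw [div_eq_mul_one_div VC (r 1 + r 3), div_eq_mul_one_div VC (r 2 + r 3),
      div_eq_mul_one_div VC (r 0)]
    linarith only [hVCS, mul_le_mul_of_nonneg_left kq14 hVCpos.le]
  have ge24 : 0 ≤ 1 - VC / (r 0 + r 3) - VC / (r 2 + r 3) - VC / r 1 := by
    rw [div_eq_mul_one_div VC (r 0 + r 3), div_eq_mul_one_div VC (r 2 + r 3),
      div_eq_mul_one_div VC (r 1)]
    linarith only [hVCS, mul_le_mul_of_nonneg_left kq24 hVCpos.le]
  have ge34 : 0 ≤ 1 - VC / (r 0 + r 3) - VC / (r 1 + r 3) - VC / r 2 := by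
    rw [div_eq_mul_one_div VC (r 0 + r 3), div_eq_mul_one_div VC (r 1 + r 3),
      div_eq_mul_one_div VC (r 2)]
    linarith only [hVCS, mul_le_mul_of_nonneg_left h2 hVCpos.le]
  have hpc : (Finset.univ : Finset (Fin 4)).powersetCard 2 =
      {({0,1} : Finset (Fin 4)), {0,2}, {1,2}, {0,3}, {1,3}, {2,3}} := by decide
  -- key inequalities for the pair searches
  have key1 : r 3 * (1 / (r 0 + r 3) + 1 / (r 1 + r 3) + 1 / (r 2 + r 3)) ≤ 1 := by
    linarith only [mul_le_mul_of_nonneg_left h1 hd.le, ud1]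
  have key01 : (r 0 + r 1) * ((1 / r 0 - 1 / (r 0 + r 3)) +
      (1 / r 1 - 1 / (r 1 + r 3)) - (1 / r 2 - 1 / (r 2 + r 3))) ≤ 2 := by
    have e1 : (1 / r 0 - 1 / (r 0 + r 3)) + (1 / r 1 - 1 / (r 1 + r 3)) -
        (1 / r 2 - 1 / (r 2 + r 3)) ≤ r 3 / (r 0 * (r 0 + r 3)) := by
      rw [← da']; linarith only [m_cb]
    have e2 : r 3 / (r 0 * (r 0 + r 3)) ≤ 2 / (r 0 + r 1) := by
      rw [div_le_div_iff₀ (by positivity) (by positivity)]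
      linarith only [mul_le_mul_of_nonneg_right hba hd.le, mul_pos ha ha, mul_pos ha hd]
    have e3 := mul_le_mul_of_nonneg_left (e1.trans e2) (by linarith : (0:ℝ) ≤ r 0 + r 1)
    have e5 : (r 0 + r 1) * (2 / (r 0 + r 1)) = 2 := by field_simp
    linarith only [e3, e5]
  have key02 : (r 0 + r 2) * ((1 / r 0 - 1 / (r 0 + r 3)) +
      (1 / r 2 - 1 / (r 2 + r 3)) - (1 / r 1 - 1 / (r 1 + r 3))) ≤ 2 := by
    have e1 : (1 / r 0 - 1 / (r 0 + r 3)) + (1 / r 2 - 1 / (r 2 + r 3)) -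
        (1 / r 1 - 1 / (r 1 + r 3)) ≤ 2 * (r 3 / (r 0 * (r 0 + r 3))) := by
      rw [← da']; linarith only [h2]
    have e2 : 2 * (r 3 / (r 0 * (r 0 + r 3))) ≤ 2 / (r 0 + r 2) := by
      rw [mul_div_assoc', div_le_div_iff₀ (by positivity) (by positivity)]
      linarith only [mul_le_mul hca hda hd.le ha.le, mul_pos ha hd, mul_pos ha ha]
    have e3 := mul_le_mul_of_nonneg_left (e1.trans e2) (by linarith : (0:ℝ) ≤ r 0 + r 2)
    have e5 : (r 0 + r 2) * (2 / (r 0 + r 2)) = 2 := by field_simp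
    linarith only [e3, e5]
  have key12 : (r 1 + r 2) * ((1 / r 1 - 1 / (r 1 + r 3)) +
      (1 / r 2 - 1 / (r 2 + r 3)) - (1 / r 0 - 1 / (r 0 + r 3))) ≤ 2 := by
    have e1 : (1 / r 1 - 1 / (r 1 + r 3)) + (1 / r 2 - 1 / (r 2 + r 3)) -
        (1 / r 0 - 1 / (r 0 + r 3)) ≤ 2 * (r 3 / (r 1 * (r 1 + r 3))) := by
      rw [← db']; linarith only [h2]
    have e2 : 2 * (r 3 / (r 1 * (r 1 + r 3))) ≤ 2 / (r 1 + r 2) := by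
      rw [mul_div_assoc', div_le_div_iff₀ (by positivity) (by positivity)]
      linarith only [mul_le_mul hcb hdb hd.le hb.le, mul_pos hb hd, mul_pos hb hb]
    have e3 := mul_le_mul_of_nonneg_left (e1.trans e2) (by linarith : (0:ℝ) ≤ r 1 + r 2)
    have e5 : (r 1 + r 2) * (2 / (r 1 + r 2)) = 2 := by field_simp
    linarith only [e3, e5]
  refine ⟨?_, ?_, ?_⟩
  · intro P hP
    rw [hpc] at hP
    simp only [Finset.mem_insert, Finset.mem_singleton] at hP
    rcases hP with rfl | rfl | rfl | rfl | rfl | rfl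
    · exact ⟨by rw [q01]; positivity, by rw [q01]; exact le3⟩
    · exact ⟨by rw [q02]; positivity, by rw [q02]; exact le2⟩
    · exact ⟨by rw [q12]; positivity, by rw [q12]; exact le1⟩
    · refine ⟨by rw [q03]; exact ge14, ?_⟩
      rw [q03]
      linarith only [div_pos hVCpos hbd, div_pos hVCpos hcd, div_pos hVCpos ha]
    · refine ⟨by rw [q13]; exact ge24, ?_⟩
      rw [q13]
      linarith only [div_pos hVCpos had, div_pos hVCpos hcd, div_pos hVCpos hb]
    · refine ⟨by rw [q23]; exact ge34, ?_⟩
      rw [q23]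
      linarith only [div_pos hVCpos had, div_pos hVCpos hbd, div_pos hVCpos hc]
  · rw [hpc, Finset.sum_insert (by decide), Finset.sum_insert (by decide),
      Finset.sum_insert (by decide), Finset.sum_insert (by decide),
      Finset.sum_insert (by decide), Finset.sum_singleton,
      q01, q02, q12, q03, q13, q23]
    linear_combination -hVCS
  · intro S hne hcard
    have hScases : ∀ T : Finset (Fin 4), T ≠ ∅ → T.card ≤ 2 →
        T = {0} ∨ T = {1} ∨ T = {2} ∨ T = {3} ∨ T = {0,1} ∨ T = {0,2} ∨
        T = {0,3} ∨ T = {1,2} ∨ T = {1,3} ∨ T = {2,3} := by decide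
    rcases hScases S hne.ne_empty hcard with
      rfl | rfl | rfl | rfl | rfl | rfl | rfl | rfl | rfl | rfl
    · rw [show ((Finset.univ : Finset (Fin 4)).powersetCard 2).filter
          (fun P => Disjoint P ({0} : Finset (Fin 4))) =
          {({1,2} : Finset (Fin 4)), {1,3}, {2,3}} from by decide,
        Finset.sum_insert (by decide), Finset.sum_insert (by decide),
        Finset.sum_singleton, Finset.sum_singleton, q12, q13, q23]
      exact le_of_eq (by linear_combination (-(r 0)) * hVCS + VC * ua1)
    · rw [show ((Finset.univ : Finset (Fin 4)).powersetCard 2).filter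
          (fun P => Disjoint P ({1} : Finset (Fin 4))) =
          {({0,2} : Finset (Fin 4)), {0,3}, {2,3}} from by decide,
        Finset.sum_insert (by decide), Finset.sum_insert (by decide),
        Finset.sum_singleton, Finset.sum_singleton, q02, q03, q23]
      exact le_of_eq (by linear_combination (-(r 1)) * hVCS + VC * ub1)
    · rw [show ((Finset.univ : Finset (Fin 4)).powersetCard 2).filter
          (fun P => Disjoint P ({2} : Finset (Fin 4))) =
          {({0,1} : Finset (Fin 4)), {0,3}, {1,3}} from by decide,
        Finset.sum_insert (by decide), Finset.sum_insert (by decide),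
        Finset.sum_singleton, Finset.sum_singleton, q01, q03, q13]
      exact le_of_eq (by linear_combination (-(r 2)) * hVCS + VC * uc1)
    · rw [show ((Finset.univ : Finset (Fin 4)).powersetCard 2).filter
          (fun P => Disjoint P ({3} : Finset (Fin 4))) =
          {({0,1} : Finset (Fin 4)), {0,2}, {1,2}} from by decide,
        Finset.sum_insert (by decide), Finset.sum_insert (by decide),
        Finset.sum_singleton, Finset.sum_singleton, q01, q02, q12]
      rw [div_eq_mul_one_div VC (r 2 + r 3), div_eq_mul_one_div VC (r 1 + r 3),
        div_eq_mul_one_div VC (r 0 + r 3)]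
      linarith only [mul_le_mul_of_nonneg_left key1 hVCpos.le]
    · rw [show ((Finset.univ : Finset (Fin 4)).powersetCard 2).filter
          (fun P => Disjoint P ({0,1} : Finset (Fin 4))) =
          {({2,3} : Finset (Fin 4))} from by decide,
        Finset.sum_singleton, Finset.sum_pair (by decide), q23]
      have hS2 : (r 0 + r 1) * (VC * (1 / r 0 + 1 / r 1 + 1 / r 2 + 1 / (r 0 + r 3) +
          1 / (r 1 + r 3) + 1 / (r 2 + r 3))) = (r 0 + r 1) * 2 := by rw [hVCS]
      rw [div_eq_mul_one_div VC (r 0 + r 3), div_eq_mul_one_div VC (r 1 + r 3),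
        div_eq_mul_one_div VC (r 2)]
      linarith only [hS2, mul_le_mul_of_nonneg_left key01 hVCpos.le]
    · rw [show ((Finset.univ : Finset (Fin 4)).powersetCard 2).filter
          (fun P => Disjoint P ({0,2} : Finset (Fin 4))) =
          {({1,3} : Finset (Fin 4))} from by decide,
        Finset.sum_singleton, Finset.sum_pair (by decide), q13]
      have hS2 : (r 0 + r 2) * (VC * (1 / r 0 + 1 / r 1 + 1 / r 2 + 1 / (r 0 + r 3) +
          1 / (r 1 + r 3) + 1 / (r 2 + r 3))) = (r 0 + r 2) * 2 := by rw [hVCS]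
      rw [div_eq_mul_one_div VC (r 0 + r 3), div_eq_mul_one_div VC (r 2 + r 3),
        div_eq_mul_one_div VC (r 1)]
      linarith only [hS2, mul_le_mul_of_nonneg_left key02 hVCpos.le]
    · rw [show ((Finset.univ : Finset (Fin 4)).powersetCard 2).filter
          (fun P => Disjoint P ({0,3} : Finset (Fin 4))) =
          {({1,2} : Finset (Fin 4))} from by decide,
        Finset.sum_singleton, Finset.sum_pair (by decide), q12]
      exact le_of_eq (by linear_combination VC * uad1)
    · rw [show ((Finset.univ : Finset (Fin 4)).powersetCard 2).filter
          (fun P => Disjoint P ({1,2} : Finset (Fin 4))) =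
          {({0,3} : Finset (Fin 4))} from by decide,
        Finset.sum_singleton, Finset.sum_pair (by decide), q03]
      have hS2 : (r 1 + r 2) * (VC * (1 / r 0 + 1 / r 1 + 1 / r 2 + 1 / (r 0 + r 3) +
          1 / (r 1 + r 3) + 1 / (r 2 + r 3))) = (r 1 + r 2) * 2 := by rw [hVCS]
      rw [div_eq_mul_one_div VC (r 1 + r 3), div_eq_mul_one_div VC (r 2 + r 3),
        div_eq_mul_one_div VC (r 0)]
      linarith only [hS2, mul_le_mul_of_nonneg_left key12 hVCpos.le]
    · rw [show ((Finset.univ : Finset (Fin 4)).powersetCard 2).filter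
          (fun P => Disjoint P ({1,3} : Finset (Fin 4))) =
          {({0,2} : Finset (Fin 4))} from by decide,
        Finset.sum_singleton, Finset.sum_pair (by decide), q02]
      exact le_of_eq (by linear_combination VC * ubd1)
    · rw [show ((Finset.univ : Finset (Fin 4)).powersetCard 2).filter
          (fun P => Disjoint P ({2,3} : Finset (Fin 4))) =
          {({0,1} : Finset (Fin 4))} from by decide,
        Finset.sum_singleton, Finset.sum_pair (by decide), q01]
      exact le_of_eq (by linear_combination VC * ucd1)
end

section
/- Let the booby trap game be played on the complete hypergraph with n boxes having rewards r_1,...,r_n > 0 summing to R_0 and k booby traps. Consider the Searcher strategy that opens each box independently with probability 1/(k+1). Against any k-subset H of trapped boxes, the expected payoff is (1 - 1/(k+1))^k · r(H̄)/(k+1), and hence the value V of the game satisfies V ≥ (R_0/(k+1))·(1 - 1/(k+1))^k · (1 - r([k])/R_0), where r([k]) is the sum of the k largest rewards. -/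
open Finset

lemma aux_G (p q : ℝ) (hpq : p + q = 1) (H : Finset ℕ) (A : Finset ℕ) :
    ∑ S ∈ A.powerset, p ^ S.card * q ^ (A.card - S.card) *
      (if Disjoint S H then (1:ℝ) else 0) = q ^ (A ∩ H).card := by
  induction A using Finset.induction_on with
  | empty => simp
  | @insert a A ha ih =>
    have hinj : ∀ x ∈ A.powerset, ∀ y ∈ A.powerset, insert a x = insert a y → x = y := by
      intro x hx y hy hxy
      have hax : a ∉ x := fun h => ha (mem_powerset.mp hx h)
      have hay : a ∉ y := fun h => ha (mem_powerset.mp hy h)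
      rw [← erase_insert hax, ← erase_insert hay, hxy]
    have hdisj : Disjoint A.powerset (A.powerset.image (insert a ·)) := by
      simp only [disjoint_left, mem_image, mem_powerset]
      rintro S hS ⟨T, hT, rfl⟩
      exact ha (hS (mem_insert_self a T))
    rw [powerset_insert, sum_union hdisj, sum_image hinj]
    have hc : (insert a A).card = A.card + 1 := card_insert_of_notMem ha
    have h1 : ∑ S ∈ A.powerset, p ^ S.card * q ^ ((insert a A).card - S.card) *
        (if Disjoint S H then (1:ℝ) else 0)
        = q * ∑ S ∈ A.powerset, p ^ S.card * q ^ (A.card - S.card) *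
        (if Disjoint S H then (1:ℝ) else 0) := by
      rw [mul_sum]
      refine sum_congr rfl fun S hS => ?_
      have hSA : S.card ≤ A.card := card_le_card (mem_powerset.mp hS)
      rw [hc, Nat.succ_sub hSA, pow_succ]
      ring
    rw [h1, ih]
    by_cases h : a ∈ H
    · have h2 : ∀ S ∈ A.powerset, p ^ (insert a S).card * q ^ ((insert a A).card - (insert a S).card) *
          (if Disjoint (insert a S) H then (1:ℝ) else 0) = 0 := by
        intro S hS
        have : ¬ Disjoint (insert a S) H := by
          simp [Finset.disjoint_insert_left, h]
        simp [this]
      rw [sum_congr rfl h2, sum_const_zero, add_zero,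
        Finset.insert_inter_of_mem h, card_insert_of_notMem (fun hx => ha (mem_of_mem_inter_left hx)),
        pow_succ]
      ring
    · have h2 : ∑ S ∈ A.powerset, p ^ (insert a S).card * q ^ ((insert a A).card - (insert a S).card) *
          (if Disjoint (insert a S) H then (1:ℝ) else 0)
          = p * ∑ S ∈ A.powerset, p ^ S.card * q ^ (A.card - S.card) *
          (if Disjoint S H then (1:ℝ) else 0) := by
        rw [mul_sum]
        refine sum_congr rfl fun S hS => ?_
        have haS : a ∉ S := fun hx => ha (mem_powerset.mp hS hx)
        rw [card_insert_of_notMem haS, hc, Nat.succ_sub_succ, pow_succ]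
        simp only [Finset.disjoint_insert_left, h, not_false_iff, true_and]
        ring
      rw [h2, ih, Finset.insert_inter_of_notMem h]
      linear_combination (q ^ (A ∩ H).card) * hpq

lemma aux_F (p q : ℝ) (hpq : p + q = 1) (r : ℕ → ℝ) (H : Finset ℕ) (A : Finset ℕ) :
    ∑ S ∈ A.powerset, p ^ S.card * q ^ (A.card - S.card) *
      (if Disjoint S H then ∑ i ∈ S, r i else 0)
      = p * q ^ (A ∩ H).card * ∑ i ∈ A \ H, r i := by
  induction A using Finset.induction_on with
  | empty => simp
  | @insert a A ha ih =>
    have hinj : ∀ x ∈ A.powerset, ∀ y ∈ A.powerset, insert a x = insert a y → x = y := by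
      intro x hx y hy hxy
      have hax : a ∉ x := fun h => ha (mem_powerset.mp hx h)
      have hay : a ∉ y := fun h => ha (mem_powerset.mp hy h)
      rw [← erase_insert hax, ← erase_insert hay, hxy]
    have hdisj : Disjoint A.powerset (A.powerset.image (insert a ·)) := by
      simp only [disjoint_left, mem_image, mem_powerset]
      rintro S hS ⟨T, hT, rfl⟩
      exact ha (hS (mem_insert_self a T))
    rw [powerset_insert, sum_union hdisj, sum_image hinj]
    have hc : (insert a A).card = A.card + 1 := card_insert_of_notMem ha
    have h1 : ∑ S ∈ A.powerset, p ^ S.card * q ^ ((insert a A).card - S.card) *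
        (if Disjoint S H then ∑ i ∈ S, r i else 0)
        = q * ∑ S ∈ A.powerset, p ^ S.card * q ^ (A.card - S.card) *
        (if Disjoint S H then ∑ i ∈ S, r i else 0) := by
      rw [mul_sum]
      refine sum_congr rfl fun S hS => ?_
      have hSA : S.card ≤ A.card := card_le_card (mem_powerset.mp hS)
      rw [hc, Nat.succ_sub hSA, pow_succ]
      ring
    rw [h1, ih]
    by_cases h : a ∈ H
    · have h2 : ∀ S ∈ A.powerset, p ^ (insert a S).card * q ^ ((insert a A).card - (insert a S).card) *
          (if Disjoint (insert a S) H then ∑ i ∈ insert a S, r i else 0) = 0 := by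
        intro S hS
        have : ¬ Disjoint (insert a S) H := by
          simp [Finset.disjoint_insert_left, h]
        simp [this]
      rw [sum_congr rfl h2, sum_const_zero, add_zero,
        Finset.insert_inter_of_mem h,
        card_insert_of_notMem (fun hx => ha (mem_of_mem_inter_left hx)),
        Finset.insert_sdiff_of_mem _ h, pow_succ]
      ring
    · have h2 : ∑ S ∈ A.powerset, p ^ (insert a S).card * q ^ ((insert a A).card - (insert a S).card) *
          (if Disjoint (insert a S) H then ∑ i ∈ insert a S, r i else 0)
          = p * (r a * (∑ S ∈ A.powerset, p ^ S.card * q ^ (A.card - S.card) *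
              (if Disjoint S H then (1:ℝ) else 0))
            + ∑ S ∈ A.powerset, p ^ S.card * q ^ (A.card - S.card) *
              (if Disjoint S H then ∑ i ∈ S, r i else 0)) := by
        rw [mul_add, mul_sum, mul_sum, mul_sum, ← sum_add_distrib]
        refine sum_congr rfl fun S hS => ?_
        have haS : a ∉ S := fun hx => ha (mem_powerset.mp hS hx)
        rw [card_insert_of_notMem haS, hc, Nat.succ_sub_succ, pow_succ,
          sum_insert haS]
        by_cases hd : Disjoint S H
        · have : Disjoint (insert a S) H := by
            rw [Finset.disjoint_insert_left]; exact ⟨h, hd⟩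
          simp only [this, hd, if_pos]
          ring
        · have : ¬ Disjoint (insert a S) H := fun hx =>
            hd (hx.mono_left (Finset.subset_insert a S))
          simp only [this, hd, if_neg, not_false_iff, mul_zero, add_zero]
      rw [h2, aux_G p q hpq, ih, Finset.insert_inter_of_notMem h,
        Finset.insert_sdiff_of_notMem _ h, sum_insert (fun hx => ha (mem_sdiff.mp hx).1)]
      linear_combination (p * q ^ (A ∩ H).card * ∑ i ∈ A \ H, r i) * hpq

lemma aux_topk (n : ℕ) (r : ℕ → ℝ) (hmono : ∀ i j, i ≤ j → j < n → r j ≤ r i) :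
    ∀ k : ℕ, ∀ H : Finset ℕ, H ⊆ Finset.range n → H.card = k →
      ∑ i ∈ H, r i ≤ ∑ i ∈ Finset.range k, r i := by
  intro k
  induction k with
  | zero => intro H _ hc; simp [Finset.card_eq_zero.mp hc]
  | succ k ih =>
    intro H hHn hc
    have hne : H.Nonempty := card_pos.mp (by omega)
    set m := H.max' hne with hm
    have hmH : m ∈ H := H.max'_mem hne
    have hmn : m < n := mem_range.mp (hHn hmH)
    have hkm : k ≤ m := by
      have hsub : H ⊆ Finset.range (m + 1) := fun x hx =>
        mem_range.mpr (Nat.lt_succ_of_le (H.le_max' x hx))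
      have := card_le_card hsub
      rw [hc, card_range] at this
      omega
    have herase : (H.erase m).card = k := by rw [card_erase_of_mem hmH, hc]; omega
    have h1 := ih (H.erase m) (fun x hx => hHn (mem_of_mem_erase hx)) herase
    have h2 : r m ≤ r k := hmono k m hkm hmn
    rw [← Finset.sum_erase_add H r hmH, Finset.sum_range_succ]
    linarith

/-- opening each box independently with probability `1/(k+1)`
yields, against any `k`-subset `H`, expected payoff
`(1 - 1/(k+1))^k · r(H̄)/(k+1)`, and hence the value satisfies
`V ≥ (R₀/(k+1))·(1 - 1/(k+1))^k·(1 - r([k])/R₀)`, with `r([k])` the sum of the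
`k` largest rewards (boxes indexed `0,…,n-1` with `r` nonincreasing). -/
theorem stmt_18 (n k : ℕ) (hk1 : 1 ≤ k) (hkn : k ≤ n - 1) (hn : 1 ≤ n)
    (r : ℕ → ℝ) (hr : ∀ i < n, 0 < r i)
    (hmono : ∀ i j, i ≤ j → j < n → r j ≤ r i)
    (R0 : ℝ) (hR0 : R0 = ∑ i ∈ Finset.range n, r i) :
    ∀ H : Finset ℕ, H ⊆ Finset.range n → H.card = k →
      (∑ S ∈ (Finset.range n).powerset,
          ((1 / ((k : ℝ) + 1)) ^ S.card * ((k : ℝ) / ((k : ℝ) + 1)) ^ (n - S.card)) *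
            (if Disjoint S H then ∑ i ∈ S, r i else 0))
        = (1 - 1 / ((k : ℝ) + 1)) ^ k * (∑ i ∈ Finset.range n \ H, r i) / ((k : ℝ) + 1)
      ∧
      (R0 / ((k : ℝ) + 1)) * (1 - 1 / ((k : ℝ) + 1)) ^ k *
          (1 - (∑ i ∈ Finset.range k, r i) / R0)
        ≤ ∑ S ∈ (Finset.range n).powerset,
            ((1 / ((k : ℝ) + 1)) ^ S.card * ((k : ℝ) / ((k : ℝ) + 1)) ^ (n - S.card)) *
              (if Disjoint S H then ∑ i ∈ S, r i else 0) := by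
  intro H hH hcard
  have hk0 : ((k : ℝ) + 1) ≠ 0 := by positivity
  have hpq : 1 / ((k : ℝ) + 1) + (k : ℝ) / ((k : ℝ) + 1) = 1 := by field_simp; ring
  have hq : (1 : ℝ) - 1 / ((k : ℝ) + 1) = (k : ℝ) / ((k : ℝ) + 1) := by field_simp; ring
  have hF := aux_F (1 / ((k : ℝ) + 1)) ((k : ℝ) / ((k : ℝ) + 1)) hpq r H (Finset.range n)
  rw [card_range, Finset.inter_eq_right.mpr hH, hcard] at hF
  have heq : (∑ S ∈ (Finset.range n).powerset,
          ((1 / ((k : ℝ) + 1)) ^ S.card * ((k : ℝ) / ((k : ℝ) + 1)) ^ (n - S.card)) *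
            (if Disjoint S H then ∑ i ∈ S, r i else 0))
        = (1 - 1 / ((k : ℝ) + 1)) ^ k * (∑ i ∈ Finset.range n \ H, r i) / ((k : ℝ) + 1) := by
    rw [hF, hq]; ring
  refine ⟨heq, ?_⟩
  rw [heq, hq]
  have hR0pos : 0 < R0 := by
    rw [hR0]
    apply Finset.sum_pos (fun i hi => hr i (mem_range.mp hi))
    exact nonempty_range_iff.mpr (by omega)
  have hsd : ∑ i ∈ Finset.range n \ H, r i = R0 - ∑ i ∈ H, r i := by
    rw [hR0, Finset.sum_sdiff_eq_sub hH]
  have hHk : ∑ i ∈ H, r i ≤ ∑ i ∈ Finset.range k, r i :=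
    aux_topk n r hmono k H hH hcard
  have hqk : (0:ℝ) < ((k : ℝ) / ((k : ℝ) + 1)) ^ k / ((k : ℝ) + 1) := by
    have : (0:ℝ) < (k : ℝ) := by exact_mod_cast hk1
    positivity
  have hlhs : (R0 / ((k : ℝ) + 1)) * ((k : ℝ) / ((k : ℝ) + 1)) ^ k *
      (1 - (∑ i ∈ Finset.range k, r i) / R0)
      = ((k : ℝ) / ((k : ℝ) + 1)) ^ k / ((k : ℝ) + 1) * (R0 - ∑ i ∈ Finset.range k, r i) := by
    field_simp
  rw [hlhs, hsd]
  have : ((k : ℝ) / ((k : ℝ) + 1)) ^ k * (R0 - ∑ i ∈ H, r i) / ((k : ℝ) + 1)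
      = ((k : ℝ) / ((k : ℝ) + 1)) ^ k / ((k : ℝ) + 1) * (R0 - ∑ i ∈ H, r i) := by ring
  rw [this]
  exact mul_le_mul_of_nonneg_left (by linarith) hqk.le
end
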